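/- arXiv:1204.2438 — 11 statements merged into one kernel-verified Lean document; each statement's English description precedes it below -/
import Mathlib

section
/- Let X be a topological space of countable tightness. Then hl(X) ≤ sup{ w(K) : K is a compact convex subset of SC_p(X) }. -/
open Set Filter Topology Cardinal

/-- A function is scatteredly continuous if every nonempty subset `A` of the domain
contains a point at which the restriction `f|A` is continuous. -/
def ScatCont {X Y : Type*} [TopologicalSpace X] [TopologicalSpace Y] (f : X → Y) : Prop :=
  ∀ A : Set X, A.Nonempty → ∃ a ∈ A, ContinuousWithinAt f A a

/-- A family of functions is scatteredly continuous if every nonempty subset `A` of the domain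
contains a point at which all restrictions `f|A`, `f ∈ F`, are continuous. -/
def ScatContFam {X Y : Type*} [TopologicalSpace X] [TopologicalSpace Y]
    (F : Set (X → Y)) : Prop :=
  ∀ A : Set X, A.Nonempty → ∃ a ∈ A, ∀ f ∈ F, ContinuousWithinAt f A a

/-- A function is weakly discontinuous if every subset `A` of the domain contains an
open (in `A`) dense (in `A`) subset `U` such that `f|U` is continuous. -/
def WeaklyDisc {X Y : Type*} [TopologicalSpace X] [TopologicalSpace Y] (f : X → Y) : Prop :=
  ∀ A : Set X, ∃ U : Set X, U ⊆ A ∧ (∃ V : Set X, IsOpen V ∧ U = V ∩ A) ∧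
    A ⊆ closure U ∧ ContinuousOn f U

/-- A family of functions is weakly discontinuous if every subset `A` of the domain contains an
open (in `A`) dense (in `A`) subset `U` such that every `f|U`, `f ∈ F`, is continuous. -/
def WeaklyDiscFam {X Y : Type*} [TopologicalSpace X] [TopologicalSpace Y]
    (F : Set (X → Y)) : Prop :=
  ∀ A : Set X, ∃ U : Set X, U ⊆ A ∧ (∃ V : Set X, IsOpen V ∧ U = V ∩ A) ∧
    A ⊆ closure U ∧ ∀ f ∈ F, ContinuousOn f U

/-- The decomposition number of a family `F` of functions: the smallest cardinality of a
cover `𝒞` of `X` such that every `f ∈ F` restricted to every `C ∈ 𝒞` is continuous. -/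
noncomputable def Dec {X Y : Type*} [TopologicalSpace X] [TopologicalSpace Y]
    (F : Set (X → Y)) : Cardinal :=
  sInf { c : Cardinal | ∃ 𝒞 : Set (Set X), c = #𝒞 ∧ ⋃₀ 𝒞 = Set.univ ∧
    ∀ C ∈ 𝒞, ∀ f ∈ F, ContinuousOn f C }

/-- The Lindelöf number: the smallest infinite cardinal `κ` such that every open cover
has a subcover of cardinality `≤ κ`. -/
noncomputable def lindelofNum (X : Type*) [TopologicalSpace X] : Cardinal :=
  sInf { κ : Cardinal | Cardinal.aleph0 ≤ κ ∧ ∀ 𝒰 : Set (Set X), (∀ U ∈ 𝒰, IsOpen U) →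
    ⋃₀ 𝒰 = Set.univ → ∃ 𝒱 ⊆ 𝒰, #𝒱 ≤ κ ∧ ⋃₀ 𝒱 = Set.univ }

/-- The hereditary Lindelöf number: the supremum of the Lindelöf numbers of all subspaces. -/
noncomputable def heredLindelofNum (X : Type*) [TopologicalSpace X] : Cardinal :=
  ⨆ Z : Set X, lindelofNum Z

/-- A network for a topological space: a family of (arbitrary) sets such that every open
neighbourhood of every point contains a member of the family containing that point. -/
def IsNetwork {X : Type*} [TopologicalSpace X] (N : Set (Set X)) : Prop :=
  ∀ (x : X) (U : Set X), IsOpen U → x ∈ U → ∃ n ∈ N, x ∈ n ∧ n ⊆ U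

/-- The network weight: the smallest infinite cardinality of a network. -/
noncomputable def netWt (X : Type*) [TopologicalSpace X] : Cardinal :=
  sInf { c : Cardinal | ∃ N : Set (Set X), IsNetwork N ∧ c = max #N Cardinal.aleph0 }

/-- The weight: the smallest infinite cardinality of a base of the topology. -/
noncomputable def wt (X : Type*) [TopologicalSpace X] : Cardinal :=
  sInf { c : Cardinal | ∃ B : Set (Set X), TopologicalSpace.IsTopologicalBasis B ∧
    c = max #B Cardinal.aleph0 }

/-- The density: the smallest cardinality of a dense subset. -/
noncomputable def dens (X : Type*) [TopologicalSpace X] : Cardinal :=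
  sInf { c : Cardinal | ∃ D : Set X, Dense D ∧ c = #D }

/-- The hereditary density: the supremum of densities of all subspaces. -/
noncomputable def heredDens (X : Type*) [TopologicalSpace X] : Cardinal :=
  ⨆ Z : Set X, dens Z

/-- The spread: the supremum of cardinalities of discrete subspaces. -/
noncomputable def spread (X : Type*) [TopologicalSpace X] : Cardinal :=
  sSup { c : Cardinal | ∃ D : Set X, DiscreteTopology D ∧ c = #D }

/-- A subset `C` of a topological vector space over `ℝ` is σ-convex if for every sequence
`(x n)` in `C` and every sequence `(t n)` of positive reals with `∑ n, t n = 1`, the series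
`∑ n, t n • x n` converges to a point of `C`. -/
def SigmaConvex {L : Type*} [AddCommGroup L] [Module ℝ L] [TopologicalSpace L]
    (C : Set L) : Prop :=
  ∀ (x : ℕ → L) (t : ℕ → ℝ), (∀ n, x n ∈ C) → (∀ n, 0 < t n) →
    Tendsto (fun N => ∑ n ∈ Finset.range N, t n) atTop (𝓝 1) →
    ∃ c ∈ C, Tendsto (fun N => ∑ n ∈ Finset.range N, t n • x n) atTop (𝓝 c)

/-- A topological space has countable tightness if every point in the closure of a set `A`
lies in the closure of a countable subset of `A`. -/
def CountablyTight (X : Type*) [TopologicalSpace X] : Prop :=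
  ∀ (A : Set X) (a : X), a ∈ closure A → ∃ B ⊆ A, B.Countable ∧ a ∈ closure B


/-!
If `hl(X) > μ`, some subspace has an open cover with no subcover of size `≤ μ`. Well-order the
cover and keep only the members containing a point `x i` not covered by earlier members: these
still cover, so there are more than `μ` of them, and the unions `W i` of the members up to `i`
form an increasing chain of open sets with `x i ∈ W i` and `x i ∉ W j` for `j < i`.

Let `K` be the set of `[0,1]`-valued functions constant on the classes of
`x ~ y ↔ ∀ i, (x ∈ W i ↔ y ∈ W i)`. It is compact and convex, and each of its members is
scatteredly continuous: on a set `A`, take a point of `A ∩ W i` for the least `i` with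
`A ∩ W i ≠ ∅`; near it, all points of `A` lie in one class. The indicators of the classes of the
`x i` form a discrete subset of `K` of size `> μ`, hence `w(K) > μ`.
-/

universe u

section Weight

variable {Y : Type u} [TopologicalSpace Y]

theorem aleph0_le_wt : ℵ₀ ≤ wt Y :=
  le_csInf ⟨_, _, TopologicalSpace.isTopologicalBasis_opens, rfl⟩
    (by rintro _ ⟨B, -, rfl⟩; exact le_max_right _ _)

theorem wt_le_max_mk_set : wt Y ≤ max #(Set Y) ℵ₀ := by
  refine (csInf_le (OrderBot.bddBelow _) ?_).trans
    (max_le_max_right _ (Cardinal.mk_set_le {U : Set Y | IsOpen U}))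
  exact ⟨_, TopologicalSpace.isTopologicalBasis_opens, rfl⟩

theorem mk_le_wt_of_separated {ι : Type u} (y : ι → Y) (O : ι → Set Y)
    (hO : ∀ i, IsOpen (O i)) (hyO : ∀ i j, y j ∈ O i ↔ j = i) : #ι ≤ wt Y := by
  refine le_csInf ⟨_, _, TopologicalSpace.isTopologicalBasis_opens, rfl⟩ ?_
  rintro _ ⟨B, hB, rfl⟩
  have hbasic (i : ι) : ∃ b ∈ B, y i ∈ b ∧ b ⊆ O i :=
    hB.exists_subset_of_mem_open ((hyO i i).2 rfl) (hO i)
  choose b hbB hyb hbO using hbasic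
  have hb_inj : Function.Injective b := fun i j hij =>
    ((hyO i j).1 (hbO i (hij ▸ hyb j))).symm
  exact (Cardinal.mk_le_of_injective (f := fun i => (⟨b i, hbB i⟩ : B))
    fun i j hij => hb_inj (congrArg Subtype.val hij)).trans (le_max_left _ _)

end Weight

section Chain

def chainTrace {ι X : Type*} (W : ι → Set X) (x : X) : Set ι := {i | x ∈ W i}

def chainCube {ι X : Type*} (W : ι → Set X) : Set (X → ℝ) :=
  (univ.pi fun _ => Icc 0 1) ∩ {f | ∀ x y, chainTrace W x = chainTrace W y → f x = f y}

variable {ι X : Type*}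

theorem isCompact_chainCube (W : ι → Set X) : IsCompact (chainCube W) := by
  refine (isCompact_univ_pi fun _ => isCompact_Icc).inter_right ?_
  simp only [ofPred_forall]
  exact isClosed_iInter fun x => isClosed_iInter fun y => isClosed_iInter fun _ =>
    isClosed_eq (continuous_apply x) (continuous_apply y)

theorem convex_chainCube (W : ι → Set X) : Convex ℝ (chainCube W) := by
  refine (convex_pi fun _ _ => convex_Icc 0 1).inter ?_
  intro f hf g hg a b _ _ _ x y hxy
  simp [hf x y hxy, hg x y hxy]

theorem comp_chainTrace_mem_chainCube (W : ι → Set X) {g : Set ι → ℝ}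
    (hg : ∀ T, g T ∈ Icc 0 1) :
    g ∘ chainTrace W ∈ chainCube W :=
  ⟨fun _ _ => hg _, fun _ _ hxy => congrArg g hxy⟩

variable [TopologicalSpace X] [LinearOrder ι] [WellFoundedLT ι]

theorem exists_eventually_chainTrace_eq {W : ι → Set X} (hW : ∀ i, IsOpen (W i))
    (hmono : Monotone W) {A : Set X} (hA : A.Nonempty) :
    ∃ a ∈ A, ∀ᶠ t in 𝓝[A] a, chainTrace W t = chainTrace W a := by
  by_cases hmeet : ∃ i, (A ∩ W i).Nonempty
  · obtain ⟨i, ⟨a, haA, hai⟩, hmin⟩ :=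
      wellFounded_lt.has_min {i | (A ∩ W i).Nonempty} hmeet
    refine ⟨a, haA, ?_⟩
    filter_upwards [self_mem_nhdsWithin, mem_nhdsWithin_of_mem_nhds ((hW i).mem_nhds hai)]
      with t htA hti
    ext j
    rcases lt_or_ge j i with hji | hij
    · have hout : ∀ y ∈ A, y ∉ W j := fun y hy hyj => hmin j ⟨y, hy, hyj⟩ hji
      simp [chainTrace, hout t htA, hout a haA]
    · simp [chainTrace, hmono hij hti, hmono hij hai]
  · obtain ⟨a, haA⟩ := hA
    refine ⟨a, haA, eventually_nhdsWithin_of_forall fun t htA => ?_⟩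
    have hout : ∀ j, ∀ y ∈ A, y ∉ W j := fun j y hy hyj => hmeet ⟨j, y, hy, hyj⟩
    ext j
    simp [chainTrace, hout j t htA, hout j a haA]

theorem scatCont_of_mem_chainCube {W : ι → Set X} (hW : ∀ i, IsOpen (W i)) (hmono : Monotone W)
    {f : X → ℝ} (hf : f ∈ chainCube W) : ScatCont f := by
  intro A hA
  obtain ⟨a, haA, hev⟩ := exists_eventually_chainTrace_eq hW hmono hA
  exact ⟨a, haA, continuousWithinAt_const.congr_of_eventuallyEq
    (hev.mono fun t ht => hf.2 t a ht) rfl⟩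

end Chain

section RightSeparated

variable {ι X : Type*} [LinearOrder ι]

theorem exists_rightSeparated_subfamily [WellFoundedLT ι] (U : ι → Set X) :
    ∃ s : Set ι, ⋃ i ∈ s, U i = ⋃ i, U i ∧
      ∃ x : s → X, ∀ i : s, x i ∈ U i ∧ ∀ j < (i : ι), x i ∉ U j := by
  set s := {i | ∃ z ∈ U i, ∀ j < i, z ∉ U j}
  refine ⟨s, subset_antisymm (iUnion₂_subset_iUnion _ _) fun z hz => ?_, ?_⟩
  · obtain ⟨i, hzi, hmin⟩ := wellFounded_lt.has_min {i | z ∈ U i} (mem_iUnion.1 hz)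
    exact mem_iUnion₂.2 ⟨i, ⟨z, hzi, fun j hj hzj => hmin j hzj hj⟩, hzi⟩
  · choose x hx using fun i : s => i.2
    exact ⟨x, hx⟩

theorem injective_chainTrace_accumulate {U : ι → Set X} {s : Set ι} {x : s → X}
    (hx : ∀ i : s, x i ∈ U i ∧ ∀ j < (i : ι), x i ∉ U j) :
    Function.Injective (chainTrace (accumulate U) ∘ x) := by
  have hne (i j : s) (hij : i < j) :
      chainTrace (accumulate U) (x i) ≠ chainTrace (accumulate U) (x j) := by
    intro htrace
    have hxi : (i : ι) ∈ chainTrace (accumulate U) (x i) :=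
      mem_accumulate.2 ⟨i, le_rfl, (hx i).1⟩
    obtain ⟨k, hki, hxj⟩ := mem_accumulate.1 (htrace ▸ hxi :)
    exact (hx j).2 k (hki.trans_lt hij) hxj
  intro i j htrace
  rcases lt_trichotomy i j with hij | rfl | hji
  · exact absurd htrace (hne i j hij)
  · rfl
  · exact absurd htrace.symm (hne j i hji)

end RightSeparated

theorem exists_chainCube_lt_wt {ι X : Type u} [LinearOrder ι] [WellFoundedLT ι]
    [TopologicalSpace X] {μ : Cardinal.{u}} {U : ι → Set X} (hU : ∀ i, IsOpen (U i))
    (hsmall : ∀ s : Set ι, ⋃ i ∈ s, U i = ⋃ i, U i → μ < #s) :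
    ∃ W : ι → Set X, (∀ i, IsOpen (W i)) ∧ Monotone W ∧ μ < wt (chainCube W) := by
  obtain ⟨s, hs, x, hx⟩ := exists_rightSeparated_subfamily U
  set W := accumulate U
  refine ⟨W, fun i => isOpen_biUnion fun j _ => hU j, monotone_accumulate,
    (hsmall s hs).trans_le ?_⟩
  let f (i : s) : chainCube W :=
    ⟨({chainTrace W (x i)} : Set (Set ι)).indicator 1 ∘ chainTrace W,
      comp_chainTrace_mem_chainCube W fun T => by
        by_cases hT : T = chainTrace W (x i) <;> simp [hT]⟩
  refine mk_le_wt_of_separated f (fun i => {g | 1 / 2 < g.1 (x i)})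
    (fun i => isOpen_lt continuous_const ((continuous_apply _).comp continuous_subtype_val))
    fun i j => ?_
  have hval : (f j : X → ℝ) (x i) = if i = j then 1 else 0 := by
    have htrace : chainTrace W (x i) = chainTrace W (x j) ↔ i = j :=
      (injective_chainTrace_accumulate hx).eq_iff
    simp [f, Pi.single_apply, htrace]
  change 1 / 2 < (f j : X → ℝ) (x i) ↔ j = i
  rw [hval]
  split_ifs with h <;> norm_num [h, eq_comm]

theorem exists_open_family_of_lt_lindelofNum {X : Type u} [TopologicalSpace X] {Z : Set X}
    {μ : Cardinal.{u}} (hμ : ℵ₀ ≤ μ) (hZ : μ < lindelofNum Z) :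
    ∃ (ι : Type u) (U : ι → Set X), (∀ i, IsOpen (U i)) ∧
      ∀ s : Set ι, ⋃ i ∈ s, U i = ⋃ i, U i → μ < #s := by
  obtain ⟨𝒰, h𝒰open, h𝒰cov, hsmall⟩ : ∃ 𝒰 : Set (Set Z), (∀ U ∈ 𝒰, IsOpen U) ∧
      ⋃₀ 𝒰 = Set.univ ∧ ∀ 𝒱 ⊆ 𝒰, #𝒱 ≤ μ → ⋃₀ 𝒱 ≠ Set.univ := by
    by_contra! h
    exact hZ.not_ge (csInf_le (OrderBot.bddBelow _) ⟨hμ, h⟩)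
  choose V hVopen hV using fun u : 𝒰 => isOpen_induced_iff.1 (h𝒰open u u.2)
  refine ⟨𝒰, V, hVopen, fun s hs => ?_⟩
  have hcov : ⋃₀ (Subtype.val '' s) = Set.univ := by
    refine eq_univ_of_forall fun z => ?_
    obtain ⟨u, hu, hzu⟩ := mem_sUnion.1 (h𝒰cov ▸ Set.mem_univ z)
    have hzV : (z : X) ∈ ⋃ i ∈ s, V i :=
      hs ▸ mem_iUnion.2 ⟨⟨u, hu⟩, (Set.ext_iff.1 (hV ⟨u, hu⟩) z).2 hzu⟩
    obtain ⟨i, hi, hzi⟩ := mem_iUnion₂.1 hzV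
    exact mem_sUnion.2 ⟨i, mem_image_of_mem _ hi, (Set.ext_iff.1 (hV i) z).1 hzi⟩
  exact lt_of_not_ge fun hle =>
    hsmall _ (image_subset_iff.2 fun i _ => i.2) (Cardinal.mk_image_le.trans hle) hcov

theorem stmt4_general {X : Type*} [TopologicalSpace X] :
    heredLindelofNum X ≤
      sSup { c : Cardinal | ∃ K : Set (X → ℝ), (∀ f ∈ K, ScatCont f) ∧
        IsCompact K ∧ Convex ℝ K ∧ c = wt K } := by
  set S := { c : Cardinal | ∃ K : Set (X → ℝ), (∀ f ∈ K, ScatCont f) ∧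
    IsCompact K ∧ Convex ℝ K ∧ c = wt K }
  have hbdd : BddAbove S := ⟨max #(Set (X → ℝ)) ℵ₀, by
    rintro _ ⟨K, -, -, -, rfl⟩
    exact wt_le_max_mk_set.trans
      (max_le_max_right _ (mk_le_of_injective Subtype.val_injective.image_injective))⟩
  have hμ : ℵ₀ ≤ sSup S := by
    refine aleph0_le_wt.trans
      (le_csSup hbdd ⟨{0}, ?_, isCompact_singleton, convex_singleton 0, rfl⟩)
    rintro _ rfl A ⟨a, ha⟩
    exact ⟨a, ha, continuousWithinAt_const⟩
  refine ciSup_le fun Z => not_lt.1 fun hZ => ?_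
  obtain ⟨ι, U, hU, hsmall⟩ := exists_open_family_of_lt_lindelofNum hμ hZ
  obtain ⟨_, _⟩ := exists_wellFoundedLT ι
  obtain ⟨W, hW, hmono, hlt⟩ := exists_chainCube_lt_wt hU hsmall
  exact hlt.not_ge (le_csSup hbdd ⟨_, fun f hf => scatCont_of_mem_chainCube hW hmono hf,
    isCompact_chainCube W, convex_chainCube W, rfl⟩)

/-- For any topological space `X` of countable tightness,
`hl(X) ≤ sup{ w(K) : K is a compact convex subset of SC_p(X) }`. -/
theorem stmt4 {X : Type*} [TopologicalSpace X] (ht : CountablyTight X) :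
    heredLindelofNum X ≤
      sSup { c : Cardinal | ∃ K : Set (X → ℝ), (∀ f ∈ K, ScatCont f) ∧
        IsCompact K ∧ Convex ℝ K ∧ c = wt K } :=
  stmt4_general
end

section
/- Let X be a separable metrizable topological space. Then every compact convex subset K of the function space SC_p(X) is metrizable. -/
open Set Filter Topology Cardinal

/-!
By the Lindelöf property and separability of `X` it suffices to show that every nonempty `A ⊆ X`
has a nonempty relatively open piece on which all `f ∈ K` are continuous: then `X` is a countable
union of sets on each of which all of `K` is continuous, a countable dense part `D` of these sets
determines every `f ∈ K`, and `K` embeds into the metrizable space `ℝ^D`.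

If some `A` has no such piece, build inside `K` functions `hₙ₊₁ = hₙ + s • (f - hₙ)`, with `s`
small, together with a growing set of nodes in `A` at which the `hₙ` keep oscillating. Next to
every node, at every scale, a later node is placed across a definite jump of the function. The
coefficient `s` is chosen so that the oscillation at the old nodes survives (when the perturbation
is unbounded near a node, at most one value of `s` can kill it) and so that values at the nodes
move by less than `2⁻ⁿ`. A cluster point `g ∈ K` of `(hₙ)` is then discontinuous on the set of
nodes at each of its points, contradicting scattered continuity of `g`.
-/

open Metric TopologicalSpace

theorem Set.Subsingleton.eventually_nhdsGT_notMem {T : Set ℝ} (h : T.Subsingleton) :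
    ∀ᶠ s in 𝓝[>] (0 : ℝ), s ∉ T :=
  h.finite.eventually_cofinite_notMem.filter_mono <|
    (nhdsWithin_mono _ fun _ hs ↦ ne_of_gt hs).trans (nhdsNE_le_cofinite 0)

theorem tendsto_add_smul_apply_nhdsGT {X : Type*} (f v : X → ℝ) (x : X) :
    Tendsto (fun s : ℝ ↦ (f + s • v) x) (𝓝[>] 0) (𝓝 (f x)) := by
  have : Continuous fun s : ℝ ↦ f x + s * v x := by fun_prop
  simpa using (this.tendsto 0).mono_left nhdsWithin_le_nhds

section Segment

variable {X : Type*} [TopologicalSpace X] {f g : X → ℝ} {A : Set X} {x : X}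

/-- Two points of the segment from `f` to `g` continuous at `x` would make the whole line,
and in particular `g`, continuous at `x`. -/
theorem subsingleton_setOf_continuousWithinAt_add_smul_sub (hg : ¬ContinuousWithinAt g A x) :
    {s : ℝ | ContinuousWithinAt (f + s • (g - f)) A x}.Subsingleton := by
  intro s hs t ht
  by_contra hst
  have hts : t - s ≠ 0 := sub_ne_zero.2 (Ne.symm hst)
  have hg_eq :
      g = f + s • (g - f) + ((1 - s) / (t - s)) • (f + t • (g - f) - (f + s • (g - f))) := by
    ext y
    simp only [Pi.add_apply, Pi.smul_apply, Pi.sub_apply, smul_eq_mul]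
    field_simp
    ring
  exact hg (hg_eq ▸ hs.add ((ht.sub hs).const_smul _))

end Segment

section Oscillation

variable {X : Type*} [PseudoMetricSpace X] {f v : X → ℝ} {A : Set X} {x : X} {d : ℝ}

def OscAtLeast (f : X → ℝ) (A : Set X) (x : X) (d : ℝ) : Prop :=
  ∀ r > 0, ∃ u ∈ A ∩ ball x r, ∃ w ∈ A ∩ ball x r, d ≤ |f u - f w|

theorem OscAtLeast.mono {d' : ℝ} (h : OscAtLeast f A x d) (hd : d' ≤ d) :
    OscAtLeast f A x d' := fun r hr ↦
  let ⟨u, hu, w, hw, huw⟩ := h r hr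
  ⟨u, hu, w, hw, hd.trans huw⟩

theorem exists_oscAtLeast_of_not_continuousWithinAt (hx : x ∈ A)
    (h : ¬ContinuousWithinAt f A x) : ∃ d > 0, OscAtLeast f A x d := by
  rw [Metric.continuousWithinAt_iff] at h
  push Not at h
  obtain ⟨d, hd, hfar⟩ := h
  refine ⟨d, hd, fun r hr ↦ ?_⟩
  obtain ⟨u, huA, hur, hdu⟩ := hfar r hr
  exact ⟨u, ⟨huA, hur⟩, x, ⟨hx, mem_ball_self hr⟩, hdu⟩

theorem OscAtLeast.exists_dist_lt (h : OscAtLeast f A x d) {r : ℝ} (hr : 0 < r) :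
    ∃ y ∈ A, dist y x < r ∧ d / 2 ≤ |f y - f x| := by
  obtain ⟨u, ⟨huA, hur⟩, w, ⟨hwA, hwr⟩, huw⟩ := h r hr
  by_cases hu : d / 2 ≤ |f u - f x|
  · exact ⟨u, huA, hur, hu⟩
  · refine ⟨w, hwA, hwr, ?_⟩
    have := abs_sub_le (f u) (f x) (f w)
    rw [abs_sub_comm (f x)] at this
    linarith

theorem OscAtLeast.add_smul_of_bounded (h : OscAtLeast f A x d) {r C s : ℝ} (hr : 0 < r)
    (hC : ∀ z ∈ A ∩ ball x r, |v z| ≤ C) (hs : 0 ≤ s) :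
    OscAtLeast (f + s • v) A x (d - 2 * s * C) := by
  intro ρ hρ
  have hball : ball x (min ρ r) ⊆ ball x ρ := ball_subset_ball (min_le_left _ _)
  have hball' : ball x (min ρ r) ⊆ ball x r := ball_subset_ball (min_le_right _ _)
  obtain ⟨u, hu, w, hw, huw⟩ := h _ (lt_min hρ hr)
  refine ⟨u, ⟨hu.1, hball hu.2⟩, w, ⟨hw.1, hball hw.2⟩, ?_⟩
  have hvu := hC u ⟨hu.1, hball' hu.2⟩
  have hvw := hC w ⟨hw.1, hball' hw.2⟩
  have hv : |s * v w - s * v u| ≤ 2 * s * C := by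
    rw [← mul_sub, abs_mul, abs_of_nonneg hs]
    nlinarith [abs_sub (v w) (v u)]
  have key := abs_sub_abs_le_abs_sub (f u - f w) (s * v w - s * v u)
  rw [show f u - f w - (s * v w - s * v u) = f u + s * v u - (f w + s * v w) by ring] at key
  simp only [Pi.add_apply, Pi.smul_apply, smul_eq_mul]
  linarith

theorem not_oscAtLeast_iff : ¬OscAtLeast f A x d ↔
    ∃ r > 0, ∀ u ∈ A ∩ ball x r, ∀ w ∈ A ∩ ball x r, |f u - f w| < d := by
  simp only [OscAtLeast]
  push Not
  rfl

/-- If `f + s • v` and `f + t • v` both oscillate by less than `d` at `x`, then `(s - t) • v` is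
bounded near `x`. -/
theorem subsingleton_setOf_not_oscAtLeast_add_smul (hx : x ∈ A)
    (hv : ¬∃ r > 0, ∃ C, ∀ z ∈ A ∩ ball x r, |v z| ≤ C) :
    {s : ℝ | ¬OscAtLeast (f + s • v) A x d}.Subsingleton := by
  intro s hs t ht
  by_contra hst
  obtain ⟨r₁, hr₁, hs⟩ := not_oscAtLeast_iff.1 hs
  obtain ⟨r₂, hr₂, ht⟩ := not_oscAtLeast_iff.1 ht
  have hst : 0 < |s - t| := abs_pos.2 (sub_ne_zero.2 hst)
  refine hv ⟨min r₁ r₂, lt_min hr₁ hr₂, |v x| + 2 * d / |s - t|, fun z ⟨hzA, hz⟩ ↦ ?_⟩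
  have e₁ := hs z ⟨hzA, ball_subset_ball (min_le_left _ _) hz⟩ x ⟨hx, mem_ball_self hr₁⟩
  have e₂ := ht z ⟨hzA, ball_subset_ball (min_le_right _ _) hz⟩ x ⟨hx, mem_ball_self hr₂⟩
  simp only [Pi.add_apply, Pi.smul_apply, smul_eq_mul] at e₁ e₂
  have key : |s - t| * |v z - v x| < 2 * d := by
    rw [← abs_mul, show (s - t) * (v z - v x) = (f z + s * v z - (f x + s * v x))
      - (f z + t * v z - (f x + t * v x)) by ring]
    linarith [abs_sub (f z + s * v z - (f x + s * v x)) (f z + t * v z - (f x + t * v x))]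
  have : |v z - v x| < 2 * d / |s - t| := by
    rw [lt_div_iff₀ hst]
    linarith
  linarith [abs_sub_abs_le_abs_sub (v z) (v x)]

theorem OscAtLeast.eventually_add_smul (h : OscAtLeast f A x d) (hx : x ∈ A) {d' : ℝ}
    (hd : d' < d) (v : X → ℝ) : ∀ᶠ s in 𝓝[>] (0 : ℝ), OscAtLeast (f + s • v) A x d' := by
  by_cases hv : ∃ r > 0, ∃ C, ∀ z ∈ A ∩ ball x r, |v z| ≤ C
  · obtain ⟨r, hr, C, hC⟩ := hv
    have hsmall : Tendsto (fun s : ℝ ↦ 2 * s * C) (𝓝[>] 0) (𝓝 0) := by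
      have : Continuous fun s : ℝ ↦ 2 * s * C := by fun_prop
      simpa using (this.tendsto 0).mono_left nhdsWithin_le_nhds
    filter_upwards [hsmall.eventually_lt_const (sub_pos.2 hd), self_mem_nhdsWithin]
      with s hs hs0
    exact (h.add_smul_of_bounded hr hC (le_of_lt hs0)).mono (by linarith)
  · exact (subsingleton_setOf_not_oscAtLeast_add_smul hx hv).eventually_nhdsGT_notMem.mono
      fun _ ↦ not_not.1

end Oscillation

section Construction

variable {X : Type*} [PseudoMetricSpace X] {K : Set (X → ℝ)} {A : Set X}

/-- Node `i` is created at stage `i`; a node `(p, γ)` marks a point `p ∈ A` at which `fn`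
oscillates by more than `γ`. -/
structure Stage (X : Type*) where
  fn : X → ℝ
  node : ℕ → Option (X × ℝ)

/-- The oscillation bound `γ * (1 + 2⁻¹ ^ M)` at a node `(p, γ)` leaves room for the countably
many perturbations still to come, each of which costs a little of it. -/
def Stage.Admissible (K : Set (X → ℝ)) (A : Set X) (M : ℕ) (S : Stage X) : Prop :=
  S.fn ∈ K ∧ ∀ i p γ, S.node i = some (p, γ) →
    i ≤ M ∧ p ∈ A ∧ 0 < γ ∧ OscAtLeast S.fn A p (γ * (1 + 2⁻¹ ^ M))

/-- Stage `M + 1` works for node `i` at precision `k` when `task (M + 1) = (i, k)`. -/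
def Stage.task (m : ℕ) : ℕ × ℕ := ((Nat.unpair m).1, (Nat.unpair (Nat.unpair m).2).1)

theorem Stage.exists_le_task_eq (i k N : ℕ) : ∃ M, N ≤ M ∧ task (M + 1) = (i, k) := by
  have hN : N + 1 ≤ Nat.pair i (Nat.pair k (N + 1)) :=
    (Nat.right_le_pair k _).trans (Nat.right_le_pair i _)
  refine ⟨Nat.pair i (Nat.pair k (N + 1)) - 1, by omega, ?_⟩
  rw [Nat.sub_add_cancel (by omega)]
  simp [task, Nat.unpair_pair]

/-- The threshold `γ / 16` makes the jump `γ / 4` between nodes survive the later moves of the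
values at both nodes, which add up to at most `2⁻¹ ^ (M + 1)` each. -/
def Stage.Step (M : ℕ) (S S' : Stage X) : Prop :=
  (∀ i ≤ M, S'.node i = S.node i) ∧
  (∀ i p γ, S.node i = some (p, γ) → |S'.fn p - S.fn p| ≤ 2⁻¹ ^ (M + 1)) ∧
  ∀ i k p γ, task (M + 1) = (i, k) → S.node i = some (p, γ) → 2⁻¹ ^ (M + 1) ≤ γ / 16 →
    ∃ q δ, S'.node (M + 1) = some (q, δ) ∧ dist q p < 1 / ((k : ℝ) + 1) ∧
      γ / 4 ≤ |S'.fn q - S'.fn p|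

theorem two_inv_pow_succ_lt (M : ℕ) : (2⁻¹ : ℝ) ^ (M + 1) < 2⁻¹ ^ M :=
  pow_lt_pow_right_of_lt_one₀ (by norm_num) (by norm_num) M.lt_succ_self

theorem exists_not_continuousWithinAt_near
    (hbad : ∀ V : Set X, IsOpen V → (V ∩ A).Nonempty → ∃ f ∈ K, ¬ContinuousOn f (V ∩ A))
    {h : X → ℝ} (hh : h ∈ K) {p : X} {γ r : ℝ} (hosc : OscAtLeast h A p γ) (hγ : 0 < γ)
    (hr : 0 < r) :
    ∃ f ∈ K, ∃ q ∈ A, dist q p < r ∧ γ / 4 < |h q - h p| ∧ ¬ContinuousWithinAt f A q := by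
  obtain ⟨q₀, hq₀A, hq₀p, hgap⟩ := hosc.exists_dist_lt (half_pos hr)
  by_cases hc : ContinuousWithinAt h A q₀
  swap
  · exact ⟨h, hh, q₀, hq₀A, by linarith, by linarith, hc⟩
  -- near `q₀` the function `h` stays close to `h q₀`, so any bad point there keeps the gap
  obtain ⟨ρ, hρ, hnear⟩ := Metric.continuousWithinAt_iff.1 hc (γ / 8) (by positivity)
  obtain ⟨f, hf, hfV⟩ := hbad (ball q₀ (min ρ (r / 2))) isOpen_ball
    ⟨q₀, mem_ball_self (lt_min hρ (half_pos hr)), hq₀A⟩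
  obtain ⟨q, ⟨hqV, hqA⟩, hfq⟩ := not_forall₂.1 hfV
  rw [inter_comm, continuousWithinAt_inter (isOpen_ball.mem_nhds hqV)] at hfq
  have hqq₀ : dist q q₀ < min ρ (r / 2) := hqV
  have hclose : |h q - h q₀| < γ / 8 :=
    Real.dist_eq _ _ ▸ hnear hqA (hqq₀.trans_le (min_le_left _ _))
  refine ⟨f, hf, q, hqA, ?_, ?_, hfq⟩
  · linarith [dist_triangle q q₀ p, min_le_right ρ (r / 2)]
  · linarith [abs_sub_le (h q₀) (h q) (h p), abs_sub_comm (h q₀) (h q)]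

namespace Stage

variable {M : ℕ} {S : Stage X}

theorem Admissible.succ (hS : S.Admissible K A M) : S.Admissible K A (M + 1) := by
  refine ⟨hS.1, fun i p γ hi ↦ ?_⟩
  obtain ⟨hiM, hp, hγ, hosc⟩ := hS.2 i p γ hi
  exact ⟨hiM.trans M.le_succ, hp, hγ,
    hosc.mono (mul_le_mul_of_nonneg_left (by linarith [two_inv_pow_succ_lt M]) hγ.le)⟩

theorem Admissible.update (hS : S.Admissible K A M) {h : X → ℝ} (hh : h ∈ K)
    (hold : ∀ i p γ, S.node i = some (p, γ) → OscAtLeast h A p (γ * (1 + 2⁻¹ ^ (M + 1))))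
    {q : X} {δ : ℝ} (hq : q ∈ A) (hδ : 0 < δ) (hosc : OscAtLeast h A q (2 * δ)) :
    (⟨h, Function.update S.node (M + 1) (some (q, δ))⟩ : Stage X).Admissible K A (M + 1) := by
  refine ⟨hh, fun i p γ hi ↦ ?_⟩
  change Function.update S.node (M + 1) (some (q, δ)) i = some (p, γ) at hi
  by_cases hiM : i = M + 1
  · subst hiM
    simp only [Function.update_self, Option.some.injEq, Prod.mk.injEq] at hi
    obtain ⟨rfl, rfl⟩ := hi
    refine ⟨le_rfl, hq, hδ, hosc.mono ?_⟩
    have : (2⁻¹ : ℝ) ^ (M + 1) ≤ 1 := pow_le_one₀ (by norm_num) (by norm_num)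
    nlinarith
  · rw [Function.update_of_ne hiM] at hi
    obtain ⟨hiM', hp, hγ, -⟩ := hS.2 i p γ hi
    exact ⟨hiM'.trans M.le_succ, hp, hγ, hold i p γ hi⟩

theorem Admissible.eventually_add_smul (hS : S.Admissible K A M) (v : X → ℝ) :
    ∀ᶠ s in 𝓝[>] (0 : ℝ), ∀ i p γ, S.node i = some (p, γ) →
      OscAtLeast (S.fn + s • v) A p (γ * (1 + 2⁻¹ ^ (M + 1))) ∧
        |(S.fn + s • v) p - S.fn p| ≤ 2⁻¹ ^ (M + 1) := by
  have hnode : ∀ i ∈ Finset.range (M + 1), ∀ᶠ s in 𝓝[>] (0 : ℝ), ∀ p γ,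
      S.node i = some (p, γ) → OscAtLeast (S.fn + s • v) A p (γ * (1 + 2⁻¹ ^ (M + 1))) ∧
        |(S.fn + s • v) p - S.fn p| ≤ 2⁻¹ ^ (M + 1) := by
    intro i _
    rcases hi : S.node i with _ | ⟨p, γ⟩
    · simp
    obtain ⟨-, hp, hγ, hosc⟩ := hS.2 i p γ hi
    have hlt : γ * (1 + 2⁻¹ ^ (M + 1)) < γ * (1 + 2⁻¹ ^ M) :=
      mul_lt_mul_of_pos_left (by linarith [two_inv_pow_succ_lt M]) hγ
    filter_upwards [hosc.eventually_add_smul hp hlt v,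
      Metric.tendsto_nhds.1 (tendsto_add_smul_apply_nhdsGT S.fn v p) (2⁻¹ ^ (M + 1))
        (by positivity)]
      with s hs hclose
    rintro _ _ ⟨⟩
    exact ⟨hs, (Real.dist_eq _ _ ▸ hclose).le⟩
  filter_upwards [(Finset.range (M + 1)).eventually_all.2 hnode] with s hs i p γ hi
  exact hs i (Finset.mem_range.2 (Nat.lt_succ_of_le (hS.2 i p γ hi).1)) p γ hi

theorem Admissible.exists_step (hconv : Convex ℝ K)
    (hbad : ∀ V : Set X, IsOpen V → (V ∩ A).Nonempty → ∃ f ∈ K, ¬ContinuousOn f (V ∩ A))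
    (hS : S.Admissible K A M) : ∃ S' : Stage X, S'.Admissible K A (M + 1) ∧ S.Step M S' := by
  rcases htask : task (M + 1) with ⟨i, k⟩
  by_cases hnode : ∃ p γ, S.node i = some (p, γ) ∧ 2⁻¹ ^ (M + 1) ≤ γ / 16
  swap
  · refine ⟨S, hS.succ, fun _ _ ↦ rfl, fun _ _ _ _ ↦ by simp, ?_⟩
    intro i' k' p γ ht hp hγ
    obtain ⟨rfl, -⟩ := Prod.mk.inj (htask.symm.trans ht)
    exact absurd ⟨p, γ, hp, hγ⟩ hnode
  obtain ⟨p, γ, hp, -⟩ := hnode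
  obtain ⟨-, -, hγ, hosc⟩ := hS.2 i p γ hp
  obtain ⟨f, hf, q, hqA, hqp, hgap, hfq⟩ := exists_not_continuousWithinAt_near hbad hS.1
    (hosc.mono (le_mul_of_one_le_right hγ.le (by simp [pow_nonneg])))
    hγ (r := 1 / ((k : ℝ) + 1)) (by positivity)
  have hgap_lim : Tendsto (fun s : ℝ ↦ |(S.fn + s • (f - S.fn)) q - (S.fn + s • (f - S.fn)) p|)
      (𝓝[>] 0) (𝓝 |S.fn q - S.fn p|) :=
    ((tendsto_add_smul_apply_nhdsGT _ _ q).sub (tendsto_add_smul_apply_nhdsGT _ _ p)).abs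
  have hs_mem : ∀ᶠ s in 𝓝[>] (0 : ℝ), s ∈ Ioc 0 1 := Ioc_mem_nhdsGT one_pos
  obtain ⟨s, ⟨hs0, hs1⟩, hdisc, hgap_s, hnodes⟩ := (hs_mem.and <|
    (subsingleton_setOf_continuousWithinAt_add_smul_sub hfq).eventually_nhdsGT_notMem.and
    <| (hgap_lim.eventually_const_lt hgap).and (hS.eventually_add_smul (f - S.fn))).exists
  obtain ⟨δ, hδ, hoscq⟩ := exists_oscAtLeast_of_not_continuousWithinAt hqA hdisc
  refine ⟨⟨S.fn + s • (f - S.fn), Function.update S.node (M + 1) (some (q, δ / 2))⟩,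
    hS.update (hconv.add_smul_sub_mem hS.1 hf ⟨hs0.le, hs1⟩) (fun j p' γ' h ↦ (hnodes j p' γ' h).1)
      hqA (half_pos hδ) (by rwa [mul_div_cancel₀ _ two_ne_zero]),
    fun j hj ↦ Function.update_of_ne (by omega) _ _, fun j p' γ' h ↦ (hnodes j p' γ' h).2, ?_⟩
  rintro i' k' p' γ' ht hp' -
  obtain ⟨rfl, rfl⟩ := Prod.mk.inj (htask.symm.trans ht)
  obtain ⟨rfl, rfl⟩ := Prod.mk.inj (Option.some.inj (hp.symm.trans hp'))
  exact ⟨q, δ / 2, Function.update_self .., hqp, hgap_s.le⟩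

end Stage

end Construction

theorem exists_seq_of_forall_exists_succ {α : Type*} {P : ℕ → α → Prop} {R : ℕ → α → α → Prop}
    {a : α} (ha : P 0 a) (h : ∀ n x, P n x → ∃ y, P (n + 1) y ∧ R n x y) :
    ∃ u : ℕ → α, u 0 = a ∧ ∀ n, P n (u n) ∧ R n (u n) (u (n + 1)) := by
  choose next hnext using h
  let u : (n : ℕ) → {x // P n x} := fun n ↦
    Nat.rec ⟨a, ha⟩ (fun n x ↦ ⟨next n x.1 x.2, (hnext n x.1 x.2).1⟩) n
  exact ⟨fun n ↦ (u n).1, rfl, fun n ↦ ⟨(u n).2, (hnext n _ _).2⟩⟩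

section Run

variable {X : Type*} [PseudoMetricSpace X] {K : Set (X → ℝ)} {A : Set X}

theorem exists_admissible_zero
    (hbad : ∀ V : Set X, IsOpen V → (V ∩ A).Nonempty → ∃ f ∈ K, ¬ContinuousOn f (V ∩ A))
    (hA : A.Nonempty) : ∃ S : Stage X, S.Admissible K A 0 ∧ ∃ e, S.node 0 = some e := by
  obtain ⟨f, hf, hfA⟩ := hbad univ isOpen_univ (by rwa [univ_inter])
  rw [univ_inter] at hfA
  obtain ⟨q, hqA, hfq⟩ := not_forall₂.1 hfA
  obtain ⟨δ, hδ, hosc⟩ := exists_oscAtLeast_of_not_continuousWithinAt hqA hfq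
  refine ⟨⟨f, fun i ↦ if i = 0 then some (q, δ / 2) else none⟩, ⟨hf, fun i p γ hi ↦ ?_⟩, _, rfl⟩
  dsimp only at hi
  split_ifs at hi with hi0
  obtain ⟨rfl, rfl⟩ := Prod.mk.inj (Option.some.inj hi).symm
  subst hi0
  exact ⟨le_rfl, hqA, half_pos hδ, hosc.mono (by norm_num)⟩

def IsRun (K : Set (X → ℝ)) (A : Set X) (F : ℕ → Stage X) : Prop :=
  ∀ n, (F n).Admissible K A n ∧ (F n).Step n (F (n + 1))

def nodePoints (F : ℕ → Stage X) : Set X := {x | ∃ n i γ, (F n).node i = some (x, γ)}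

namespace IsRun

variable {F : ℕ → Stage X} {m n i : ℕ} {p : X} {γ : ℝ}

theorem node_eq_of_le (hF : IsRun K A F) (hmn : m ≤ n) (h : (F m).node i = some (p, γ)) :
    (F n).node i = some (p, γ) := by
  induction n, hmn using Nat.le_induction with
  | base => exact h
  | succ n hmn ih => exact ((hF n).2.1 i ((hF n).1.2 i p γ ih).1).trans ih

theorem abs_sub_fn_le (hF : IsRun K A F) (hmn : m ≤ n) (h : (F m).node i = some (p, γ)) :
    |(F n).fn p - (F m).fn p| ≤ 2⁻¹ ^ m - 2⁻¹ ^ n := by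
  induction n, hmn using Nat.le_induction with
  | base => simp
  | succ n hmn ih =>
    have hstep := (hF n).2.2.1 i p γ (hF.node_eq_of_le hmn h)
    have : (2⁻¹ : ℝ) ^ n = 2 * 2⁻¹ ^ (n + 1) := by rw [pow_succ]; ring
    linarith [abs_sub_le ((F (n + 1)).fn p) ((F n).fn p) ((F m).fn p)]

theorem abs_sub_le_of_mapClusterPt (hF : IsRun K A F) {g : X → ℝ}
    (hg : MapClusterPt g atTop fun n ↦ (F n).fn) (h : (F m).node i = some (p, γ)) :
    |g p - (F m).fn p| ≤ 2⁻¹ ^ m := by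
  have hclosed : IsClosed {f : X → ℝ | |f p - (F m).fn p| ≤ 2⁻¹ ^ m} :=
    isClosed_le (by fun_prop) continuous_const
  refine hclosed.mem_of_mapClusterPt hg ?_
  filter_upwards [eventually_ge_atTop m] with n hn
  linarith [hF.abs_sub_fn_le hn h, pow_nonneg (show (0 : ℝ) ≤ 2⁻¹ by norm_num) n]

theorem exists_nodePoints_dist_lt (hF : IsRun K A F) {g : X → ℝ}
    (hg : MapClusterPt g atTop fun n ↦ (F n).fn) (h : (F m).node i = some (p, γ)) (k : ℕ) :
    ∃ q ∈ nodePoints F, dist q p < 1 / ((k : ℝ) + 1) ∧ γ / 8 ≤ |g q - g p| := by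
  have hγ : 0 < γ := ((hF m).1.2 i p γ h).2.2.1
  obtain ⟨N, hN⟩ := exists_pow_lt_of_lt_one (show (0 : ℝ) < γ / 16 by positivity)
    (show (2⁻¹ : ℝ) < 1 by norm_num)
  obtain ⟨M, hM, htask⟩ := Stage.exists_le_task_eq i k (max m N)
  have hsmall : (2⁻¹ : ℝ) ^ (M + 1) ≤ γ / 16 :=
    (pow_le_pow_of_le_one (by norm_num) (by norm_num) (by omega)).trans hN.le
  have hp := hF.node_eq_of_le (le_of_max_le_left hM) h
  obtain ⟨q, δ, hq, hqp, hgap⟩ := (hF M).2.2.2 i k p γ htask hp hsmall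
  have hgq := hF.abs_sub_le_of_mapClusterPt hg hq
  have hgp := hF.abs_sub_le_of_mapClusterPt hg (hF.node_eq_of_le (by omega : M ≤ M + 1) hp)
  refine ⟨q, ⟨M + 1, M + 1, δ, hq⟩, hqp, ?_⟩
  set G := (F (M + 1)).fn
  linarith [abs_sub_le (G q) (g q) (G p), abs_sub_le (g q) (g p) (G p), abs_sub_comm (G q) (g q)]

theorem not_continuousWithinAt (hF : IsRun K A F) {g : X → ℝ}
    (hg : MapClusterPt g atTop fun n ↦ (F n).fn) (hp : p ∈ nodePoints F) :
    ¬ContinuousWithinAt g (nodePoints F) p := by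
  obtain ⟨m, i, γ, h⟩ := hp
  have hγ : 0 < γ := ((hF m).1.2 i p γ h).2.2.1
  intro hcont
  obtain ⟨ρ, hρ, hnear⟩ := Metric.continuousWithinAt_iff.1 hcont (γ / 8) (by positivity)
  obtain ⟨k, hk⟩ := exists_nat_one_div_lt hρ
  obtain ⟨q, hq, hqp, hgap⟩ := hF.exists_nodePoints_dist_lt hg h k
  have := hnear hq (hqp.trans hk)
  rw [Real.dist_eq] at this
  linarith

end IsRun

end Run

theorem exists_isOpen_forall_continuousOn_inter {X : Type*} [PseudoMetricSpace X]
    {K : Set (X → ℝ)} (hK : ∀ f ∈ K, ScatCont f) (hcomp : IsCompact K) (hconv : Convex ℝ K)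
    {A : Set X} (hA : A.Nonempty) :
    ∃ V, IsOpen V ∧ (V ∩ A).Nonempty ∧ ∀ f ∈ K, ContinuousOn f (V ∩ A) := by
  by_contra! hbad
  obtain ⟨S₀, hS₀, e, he⟩ := exists_admissible_zero hbad hA
  obtain ⟨F, rfl, hF⟩ := exists_seq_of_forall_exists_succ hS₀ fun _ _ hS ↦
    hS.exists_step hconv hbad
  obtain ⟨g, hgK, hg⟩ := hcomp.exists_mapClusterPt (f := atTop) (u := fun n ↦ (F n).fn)
    (tendsto_principal.2 (.of_forall fun n ↦ (hF n).1.1))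
  obtain ⟨p, hp, hcont⟩ := hK g hgK (nodePoints F) ⟨e.1, 0, 0, e.2, he⟩
  exact IsRun.not_continuousWithinAt hF hg hp hcont

theorem exists_countable_sUnion_eq_univ {X : Type*} [TopologicalSpace X]
    [SecondCountableTopology X] {P : Set X → Prop}
    (hP : ∀ A : Set X, A.Nonempty → ∃ V, IsOpen V ∧ (V ∩ A).Nonempty ∧ P (V ∩ A)) :
    ∃ 𝒞 : Set (Set X), 𝒞.Countable ∧ ⋃₀ 𝒞 = Set.univ ∧ ∀ C ∈ 𝒞, P C := by
  set 𝒰 := {U : Set X | IsOpen U ∧ ∃ 𝒞 : Set (Set X), 𝒞.Countable ∧ U ⊆ ⋃₀ 𝒞 ∧ ∀ C ∈ 𝒞, P C}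
  obtain ⟨T, hT, hT𝒰, hTU⟩ := TopologicalSpace.isOpen_sUnion_countable 𝒰 fun U hU ↦ hU.1
  choose cover hcount hsub hgood using fun U : T ↦ (hT𝒰 U.2).2
  have : Countable T := hT.to_subtype
  set 𝒞 := ⋃ U : T, cover U
  have h𝒞 : ∀ C ∈ 𝒞, P C := fun C hC ↦
    let ⟨U, hU⟩ := mem_iUnion.1 hC
    hgood U C hU
  have hT𝒞 : ⋃₀ 𝒰 ⊆ ⋃₀ 𝒞 := by
    rw [← hTU]
    rintro x ⟨U, hU, hxU⟩
    obtain ⟨C, hC, hxC⟩ := hsub ⟨U, hU⟩ hxU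
    exact ⟨C, mem_iUnion.2 ⟨⟨U, hU⟩, hC⟩, hxC⟩
  refine ⟨𝒞, countable_iUnion hcount, eq_univ_of_forall fun x ↦ hT𝒞 ?_, h𝒞⟩
  by_contra hx
  -- a good open piece of the uncovered part extends the family `𝒰`, which is absurd
  obtain ⟨V, hV, ⟨y, hyV, hy⟩, hPV⟩ := hP (⋃₀ 𝒰)ᶜ ⟨x, hx⟩
  refine hy ⟨V, ⟨hV, insert (V ∩ (⋃₀ 𝒰)ᶜ) 𝒞, (countable_iUnion hcount).insert _,
    fun z hz ↦ ?_, forall_mem_insert.2 ⟨hPV, h𝒞⟩⟩, hyV⟩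
  by_cases hz𝒰 : z ∈ ⋃₀ 𝒰
  · obtain ⟨C, hC, hzC⟩ := hT𝒞 hz𝒰
    exact ⟨C, mem_insert_of_mem _ hC, hzC⟩
  · exact ⟨_, mem_insert _ _, hz, hz𝒰⟩

theorem exists_countable_forall_eqOn_imp_eq {X Y : Type*} [TopologicalSpace X]
    [PseudoMetrizableSpace X] [SeparableSpace X] [TopologicalSpace Y] [T2Space Y]
    {K : Set (X → Y)} {𝒞 : Set (Set X)} (h𝒞 : 𝒞.Countable) (hcover : ⋃₀ 𝒞 = Set.univ)
    (hcont : ∀ C ∈ 𝒞, ∀ f ∈ K, ContinuousOn f C) :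
    ∃ D : Set X, D.Countable ∧ ∀ f ∈ K, ∀ g ∈ K, EqOn f g D → f = g := by
  choose! t hts htc hdense using fun C : Set X ↦
    (IsSeparable.of_separableSpace C).exists_countable_dense_subset
  refine ⟨⋃ C ∈ 𝒞, t C, h𝒞.biUnion fun C _ ↦ htc C, fun f hf g hg hfg ↦ funext fun x ↦ ?_⟩
  obtain ⟨C, hC, hxC⟩ := mem_sUnion.1 (hcover ▸ mem_univ x)
  exact (hfg.mono (subset_biUnion_of_mem hC)).of_subset_closure (hcont C hC f hf)
    (hcont C hC g hg) (hts C) (hdense C) hxC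

theorem metrizableSpace_of_forall_eqOn_imp_eq {X : Type*} {K : Set (X → ℝ)} (hK : IsCompact K)
    {D : Set X} (hD : D.Countable) (hKD : ∀ f ∈ K, ∀ g ∈ K, EqOn f g D → f = g) :
    MetrizableSpace K := by
  have : Countable D := hD.to_subtype
  have : CompactSpace K := isCompact_iff_compactSpace.1 hK
  have : MetrizableSpace (D → ℝ) := UniformSpace.metrizableSpace
  let restrict : K → D → ℝ := fun f x ↦ (f : X → ℝ) x
  have hcont : Continuous restrict :=
    continuous_pi fun x ↦ (continuous_apply x.1).comp continuous_subtype_val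
  have hinj : restrict.Injective := fun f g hfg ↦
    Subtype.ext <| hKD f f.2 g g.2 fun x hx ↦ congrFun hfg ⟨x, hx⟩
  exact (hcont.isClosedEmbedding hinj).isEmbedding.metrizableSpace

/-- For a metrizable separable space `X`, each compact convex subset `K` of `SC_p(X)`
is metrizable. -/
theorem stmt5 {X : Type*} [TopologicalSpace X] [TopologicalSpace.MetrizableSpace X]
    [TopologicalSpace.SeparableSpace X]
    (K : Set (X → ℝ)) (hK : ∀ f ∈ K, ScatCont f)
    (hcomp : IsCompact K) (hconv : Convex ℝ K) :
    TopologicalSpace.MetrizableSpace K := by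
  let := TopologicalSpace.metrizableSpaceMetric X
  obtain ⟨𝒞, h𝒞, hcover, hcont⟩ := exists_countable_sUnion_eq_univ
    (P := fun C ↦ ∀ f ∈ K, ContinuousOn f C) fun _ hA ↦
      exists_isOpen_forall_continuousOn_inter hK hcomp hconv hA
  obtain ⟨D, hD, hKD⟩ := exists_countable_forall_eqOn_imp_eq h𝒞 hcover hcont
  exact metrizableSpace_of_forall_eqOn_imp_eq hcomp hD hKD
end

section
/- Let X be a topological space of countable tightness. Then every σ-convex subset F of the space SC*_p(X) of bounded scatteredly continuous real-valued functions on X is a weakly discontinuous family: every subset A ⊆ X contains an open dense subset U ⊆ A such that for every f ∈ F the restriction f|U : U → ℝ is continuous. -/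
open Set Filter Topology Cardinal

/-!
If a countable set `T = {t₀, t₁, …}` had no point of joint continuity of `F`, pick `hₖ ∈ F`
discontinuous on `T` at `tₖ`, witnessed by an ultrafilter `Uₖ ≤ 𝓝[T] tₖ` along which `hₖ`
converges to a limit other than `hₖ tₖ`. The weight sequences for which some jump
`∑ₘ wₘ (lim_{Uₖ} hₘ - hₘ tₖ)` vanishes form a countable union of closed nowhere dense sets, so
for generic weights the σ-convex combination `c = ∑ₘ wₘ hₘ ∈ F` jumps, by dominated
convergence, at every `tₖ`: it is continuous on `T` at no point, against scattered continuity.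

Countable tightness lifts this from countable sets to all sets. If the points `D ⊆ S` at which
some `f ∈ F` is discontinuous on `S` were dense in `S`, the discontinuities could be witnessed
inside `D`, and closing a point of `D` under countable witnesses gives a countable subset of `D`
without a point of joint continuity. So every nonempty set has a relatively open nonempty piece
on which all of `F` is continuous, and the union of these pieces is open and dense.
-/

open Function

theorem interior_preimage_singleton_eq_empty_of_injective_update {ι β : Type*} [DecidableEq ι]
    {Φ : (ι → ℝ) → β} (k : ι) (hΦ : ∀ x, Injective fun s => Φ (update x k s)) (b : β) :
    interior (Φ ⁻¹' {b}) = ∅ := by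
  refine eq_empty_of_forall_notMem fun x hx => ?_
  have hline : ∀ᶠ s in 𝓝 (x k), update x k s ∈ interior (Φ ⁻¹' {b}) := by
    have hcont : Continuous fun s : ℝ => update x k s := continuous_const.update k continuous_id
    exact hcont.continuousAt.preimage_mem_nhds (by simpa using isOpen_interior.mem_nhds hx)
  obtain ⟨s, hs, hsx⟩ := ((hline.filter_mono nhdsWithin_le_nhds).and
    (self_mem_nhdsWithin (s := {x k}ᶜ))).exists
  refine hsx (hΦ x ?_)
  simp only [update_eq_self]
  exact (interior_subset hs).trans (interior_subset hx).symm

theorem exists_forall_tsum_mul_ne_zero {a : ℕ → ℕ → ℝ} {g : ℝ → ℝ} {u : ℕ → ℝ}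
    (hg : Continuous g) (hg_inj : Injective g) (hu : Summable u)
    (hbound : ∀ m k s, ‖a m k * g s‖ ≤ u m) (hdiag : ∀ k, a k k ≠ 0) :
    ∃ x : ℕ → ℝ, ∀ k, ∑' m, a m k * g (x m) ≠ 0 := by
  set Φ : ℕ → (ℕ → ℝ) → ℝ := fun k x => ∑' m, a m k * g (x m)
  have hΦ_inj : ∀ k x, Injective fun s => Φ k (update x k s) := by
    intro k x s t hst
    have hsplit : ∀ s, Φ k (update x k s)
        = a k k * g s + ∑' m, if m = k then 0 else a m k * g (x m) := by
      intro s
      change ∑' m, a m k * g (update x k s m) = _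
      rw [(Summable.of_norm_bounded hu fun m => hbound m k _).tsum_eq_add_tsum_ite k]
      congr 1
      · simp
      · exact tsum_congr fun m => by split_ifs with hm <;> simp [hm]
    simp only [hsplit, add_left_inj] at hst
    exact hg_inj (mul_left_cancel₀ (hdiag k) hst)
  have hdense : Dense (⋂ k, Φ k ⁻¹' {0}ᶜ) := by
    refine dense_iInter_of_isOpen_nat (fun k => ?_) (fun k => ?_)
    · exact isOpen_compl_singleton.preimage
        (continuous_tsum (f := fun m (x : ℕ → ℝ) => a m k * g (x m)) (fun m => by fun_prop) hu
          fun m x => hbound m k (x m))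
    · rw [preimage_compl, ← interior_eq_empty_iff_dense_compl]
      exact interior_preimage_singleton_eq_empty_of_injective_update k (hΦ_inj k) 0
  obtain ⟨x, hx⟩ := hdense.nonempty
  exact ⟨x, by simpa [Φ] using hx⟩

theorem exists_weights_tsum_mul_ne_zero (M : ℕ → ℝ) (d : ℕ → ℕ → ℝ)
    (hd : ∀ m k, |d m k| ≤ M m) (hdiag : ∀ k, d k k ≠ 0) :
    ∃ w : ℕ → ℝ, (∀ m, 0 < w m) ∧ HasSum w 1 ∧ Summable (fun m => w m * M m) ∧
      ∀ k, ∑' m, w m * d m k ≠ 0 := by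
  have hM₀ : ∀ m, 0 ≤ M m := fun m => (abs_nonneg _).trans (hd m m)
  set c : ℕ → ℝ := fun m => (1 / 2) ^ m / (1 + M m)
  have hc_pos : ∀ m, 0 < c m := fun m => by have := hM₀ m; positivity
  have hcM : ∀ m, c m * (1 + M m) = (1 / 2) ^ m := fun m =>
    div_mul_cancel₀ _ (by linarith [hM₀ m])
  -- any continuous injective `g` with values in `(0, 4]` would do
  set g : ℝ → ℝ := fun s => 2 + Real.arctan s
  have hg_pos : ∀ s, 0 < g s := fun s => by
    linarith [Real.neg_pi_div_two_lt_arctan s, Real.pi_lt_four]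
  have hg_le : ∀ s, g s ≤ 4 := fun s => by
    linarith [Real.arctan_lt_pi_div_two s, Real.pi_lt_four]
  have hgeom : Summable fun m : ℕ => 4 * (1 / 2 : ℝ) ^ m := summable_geometric_two.mul_left 4
  have hcg : ∀ m s, c m * g s * (1 + M m) ≤ 4 * (1 / 2) ^ m := fun m s => by
    rw [mul_right_comm, hcM, mul_comm]
    exact mul_le_mul_of_nonneg_right (hg_le s) (by positivity)
  have hbound : ∀ m k s, ‖c m * d m k * g s‖ ≤ 4 * (1 / 2) ^ m := fun m k s => by
    rw [Real.norm_eq_abs, abs_mul, abs_mul, abs_of_pos (hc_pos m), abs_of_pos (hg_pos s),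
      mul_right_comm]
    refine le_trans ?_ (hcg m s)
    exact mul_le_mul_of_nonneg_left ((hd m k).trans (by linarith))
      (mul_pos (hc_pos m) (hg_pos s)).le
  obtain ⟨x, hx⟩ := exists_forall_tsum_mul_ne_zero (by fun_prop)
    (fun s t h => Real.arctan_injective (add_left_cancel h)) hgeom hbound
    (fun k => mul_ne_zero (hc_pos k).ne' (hdiag k))
  set v : ℕ → ℝ := fun m => c m * g (x m)
  have hv_pos : ∀ m, 0 < v m := fun m => mul_pos (hc_pos m) (hg_pos (x m))
  have hvM : Summable fun m => v m * (1 + M m) :=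
    .of_nonneg_of_le (fun m => (mul_pos (hv_pos m) (by linarith [hM₀ m])).le)
      (fun m => hcg m (x m)) hgeom
  have hv : Summable v := hvM.of_nonneg_of_le (fun m => (hv_pos m).le)
    fun m => le_mul_of_one_le_right (hv_pos m).le (by linarith [hM₀ m])
  have hZ : 0 < ∑' m, v m := hv.tsum_pos (fun m => (hv_pos m).le) 0 (hv_pos 0)
  refine ⟨fun m => v m / ∑' m, v m, fun m => div_pos (hv_pos m) hZ, ?_, ?_, fun k => ?_⟩
  · simpa [div_self hZ.ne'] using hv.hasSum.div_const (∑' m, v m)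
  · refine (hvM.div_const (∑' m, v m)).of_nonneg_of_le
      (fun m => mul_nonneg (div_pos (hv_pos m) hZ).le (hM₀ m)) fun m => ?_
    rw [div_mul_eq_mul_div]
    gcongr
    · exact (hv_pos m).le
    · linarith
  · have hterms : ∑' m, v m / (∑' n, v n) * d m k
        = (∑' m, c m * d m k * g (x m)) / ∑' n, v n := by
      rw [← tsum_div_const]
      exact tsum_congr fun m => by simp only [v]; ring
    exact hterms ▸ div_ne_zero (hx k) hZ.ne'

theorem Ultrafilter.exists_tendsto_of_abs_le {α : Type*} {f : α → ℝ} {M : ℝ}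
    (hf : ∀ x, |f x| ≤ M) (U : Ultrafilter α) : ∃ L, |L| ≤ M ∧ Tendsto f U (𝓝 L) := by
  obtain ⟨L, hL, hUL⟩ := isCompact_Icc.ultrafilter_le_nhds (U.map f)
    (by
      rw [Ultrafilter.coe_map, le_principal_iff]
      exact mem_map.2 (univ_mem' fun x => abs_le.1 (hf x)))
  exact ⟨L, abs_le.2 hL, hUL⟩

theorem exists_forall_continuousWithinAt_of_sigmaConvex {X : Type*} [TopologicalSpace X]
    {F : Set (X → ℝ)} (hF : ∀ f ∈ F, ScatCont f ∧ ∃ M : ℝ, ∀ x, |f x| ≤ M)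
    (hσ : SigmaConvex F) {T : Set X} (hT : T.Countable) (hne : T.Nonempty) :
    ∃ t ∈ T, ∀ f ∈ F, ContinuousWithinAt f T t := by
  by_contra! hcon
  obtain ⟨t, rfl⟩ := hT.exists_eq_range hne
  choose h hhF hh using fun k => hcon (t k) (mem_range_self k)
  have hU : ∀ k, ∃ U : Ultrafilter X,
      ↑U ≤ 𝓝[range t] (t k) ∧ ¬Tendsto (h k) U (𝓝 (h k (t k))) := by
    intro k
    have := hh k
    rw [ContinuousWithinAt, tendsto_iff_ultrafilter] at this
    push Not at this
    exact this
  choose U hUt hUh using hU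
  choose M hM using fun m => (hF (h m) (hhF m)).2
  have hM₀ : ∀ m, 0 ≤ M m := fun m => (abs_nonneg _).trans (hM m (t 0))
  choose lam hlamM hlam using fun m k => (U k).exists_tendsto_of_abs_le (hM m)
  set d : ℕ → ℕ → ℝ := fun m k => lam m k - h m (t k)
  have hd : ∀ m k, |d m k| ≤ 2 * M m := fun m k =>
    (abs_sub _ _).trans (by linarith [hlamM m k, hM m (t k)])
  have hdiag : ∀ k, d k k ≠ 0 := fun k h0 => hUh k (sub_eq_zero.1 h0 ▸ hlam k k)
  obtain ⟨w, hw_pos, hw_one, hwM, hwd⟩ := exists_weights_tsum_mul_ne_zero _ d hd hdiag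
  have hterm : ∀ m {y : ℝ}, |y| ≤ M m → ‖w m * y‖ ≤ w m * (2 * M m) := fun m y hy => by
    rw [Real.norm_eq_abs, abs_mul, abs_of_pos (hw_pos m)]
    exact mul_le_mul_of_nonneg_left (by linarith [hM₀ m]) (hw_pos m).le
  have hsum : ∀ {y : ℕ → ℝ}, (∀ m, |y m| ≤ M m) → Summable fun m => w m * y m := fun hy =>
    .of_norm_bounded hwM fun m => hterm m (hy m)
  obtain ⟨c, hcF, hc⟩ := hσ h w hhF hw_pos hw_one.tendsto_sum_nat
  have hc_eq : c = fun x => ∑' m, w m * h m x := by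
    ext x
    refine ((hsum (hM · x)).hasSum_iff_tendsto_nat.2 ?_).tsum_eq.symm
    simpa using tendsto_pi_nhds.1 hc x
  obtain ⟨_, ⟨k, rfl⟩, hck⟩ := (hF c hcF).1 (range t) hne
  have hlim_c : Tendsto c (U k) (𝓝 (c (t k))) := hck.mono_left (hUt k)
  have hlim_sum : Tendsto c (U k) (𝓝 (∑' m, w m * lam m k)) := by
    rw [hc_eq]
    exact tendsto_tsum_of_dominated_convergence hwM (fun m => (hlam m k).const_mul (w m))
      (Eventually.of_forall fun x m => hterm m (hM m x))
  have hval : c (t k) = ∑' m, w m * lam m k := tendsto_nhds_unique hlim_c hlim_sum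
  refine hwd k ?_
  simp only [d, mul_sub, (hsum (hlamM · k)).tsum_sub (hsum (hM · (t k))), ← hval, hc_eq, sub_self]

theorem CountablyTight.exists_countable_subset_forall_mem_closure {X : Type*}
    [TopologicalSpace X] (ht : CountablyTight X) {S : Set X} {E : X → Set X}
    (hES : ∀ s ∈ S, E s ⊆ S) (hE : ∀ s ∈ S, s ∈ closure (E s)) {s₀ : X} (hs₀ : s₀ ∈ S) :
    ∃ T ⊆ S, T.Countable ∧ s₀ ∈ T ∧ ∀ t ∈ T, t ∈ closure (E t ∩ T) := by
  choose! C hCE hCc hC using fun s hs => ht (E s) s (hE s hs)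
  set step : Set X → Set X := fun A => A ∪ ⋃ a ∈ A, C a
  have hstep : ∀ n, step^[n] {s₀} ⊆ S ∧ (step^[n] {s₀}).Countable := by
    intro n
    induction n with
    | zero => simpa using hs₀
    | succ n ih =>
      rw [Function.iterate_succ_apply']
      refine ⟨union_subset ih.1 (iUnion₂_subset fun a ha => (hCE a (ih.1 ha)).trans
        (hES a (ih.1 ha))), ih.2.union (ih.2.biUnion fun a ha => hCc a (ih.1 ha))⟩
  refine ⟨⋃ n, step^[n] {s₀}, iUnion_subset fun n => (hstep n).1,
    countable_iUnion fun n => (hstep n).2, mem_iUnion.2 ⟨0, rfl⟩, fun t htT => ?_⟩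
  obtain ⟨n, hn⟩ := mem_iUnion.1 htT
  have htS : t ∈ S := (hstep n).1 hn
  have hCT : C t ⊆ ⋃ n, step^[n] {s₀} := fun y hy =>
    mem_iUnion.2 ⟨n + 1, by rw [Function.iterate_succ_apply']; exact Or.inr (mem_biUnion hn hy)⟩
  exact closure_mono (subset_inter (hCE t htS) hCT) (hC t htS)

section Discontinuity

variable {X Y : Type*} [TopologicalSpace X] [TopologicalSpace Y] {f : X → Y} {S : Set X} {x : X}

theorem exists_isClosed_mem_closure_of_not_continuousWithinAt [RegularSpace Y]
    (h : ¬ContinuousWithinAt f S x) :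
    ∃ W ∈ 𝓝 (f x), IsClosed W ∧ x ∈ closure (S ∩ f ⁻¹' Wᶜ) := by
  rw [ContinuousWithinAt, (closed_nhds_basis (f x)).tendsto_right_iff] at h
  push Not at h
  obtain ⟨W, ⟨hW, hWc⟩, hfW⟩ := h
  refine ⟨W, hW, hWc, mem_closure_iff_frequently.2 ?_⟩
  simpa [Filter.not_eventually, frequently_nhdsWithin_iff, and_comm] using hfW

theorem not_continuousWithinAt_of_mem_closure {W : Set Y} (hW : W ∈ 𝓝 (f x))
    (hx : x ∈ closure (S ∩ f ⁻¹' Wᶜ)) : ¬ContinuousWithinAt f S x := fun h => by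
  have hfx := (h.mono inter_subset_left).mem_closure_image hx
  rw [← mem_interior_iff_mem_nhds] at hW
  exact closure_compl (s := W) ▸ closure_mono (image_subset_iff.2 inter_subset_right) hfx <| hW

theorem exists_mem_nhds_mem_closure_of_not_continuousWithinAt [RegularSpace Y] {D : Set X}
    (hDS : D ⊆ S) (hSD : S ⊆ closure D) (hcont : ∀ y ∈ S \ D, ContinuousWithinAt f S y)
    (hx : ¬ContinuousWithinAt f S x) : ∃ W ∈ 𝓝 (f x), x ∈ closure (D ∩ f ⁻¹' Wᶜ) := by
  obtain ⟨W, hW, hWc, hxW⟩ := exists_isClosed_mem_closure_of_not_continuousWithinAt hx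
  refine ⟨W, hW, closure_minimal (fun y hy => ?_) isClosed_closure hxW⟩
  obtain ⟨hyS, hyW⟩ := hy
  by_cases hyD : y ∈ D
  · exact subset_closure ⟨hyD, hyW⟩
  have hev : ∀ᶠ z in 𝓝 y, z ∈ S → z ∈ f ⁻¹' Wᶜ := eventually_nhdsWithin_iff.1 <|
    (hcont y ⟨hyS, hyD⟩).preimage_mem_nhdsWithin (hWc.isOpen_compl.mem_nhds hyW)
  exact mem_closure_iff_frequently.2 <| (mem_closure_iff_frequently.1 (hSD hyS)).and_eventually
    hev |>.mono fun z ⟨hzD, hz⟩ => ⟨hzD, hz (hDS hzD)⟩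

theorem CountablyTight.exists_isOpen_forall_continuousOn [RegularSpace Y] (ht : CountablyTight X)
    {F : Set (X → Y)}
    (hF : ∀ T : Set X, T.Countable → T.Nonempty → ∃ t ∈ T, ∀ f ∈ F, ContinuousWithinAt f T t)
    (hS : S.Nonempty) : ∃ O, IsOpen O ∧ (O ∩ S).Nonempty ∧ ∀ f ∈ F, ContinuousOn f (O ∩ S) := by
  set D := {y ∈ S | ∃ f ∈ F, ¬ContinuousWithinAt f S y}
  have hcont : ∀ y ∈ S \ D, ∀ f ∈ F, ContinuousWithinAt f S y := fun y hy f hf => by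
    by_contra h
    exact hy.2 ⟨hy.1, f, hf, h⟩
  by_cases hSD : S ⊆ closure D
  · exfalso
    obtain ⟨e₀, he₀⟩ := closure_nonempty_iff.1 (hS.mono hSD)
    have : Nonempty (X → Y) := let ⟨f, _⟩ := he₀.2; ⟨f⟩
    have hD : ∀ y ∈ D, ∃ f ∈ F, ¬ContinuousWithinAt f S y := fun y hy => hy.2
    choose! g hgF hg using hD
    have hgW : ∀ y ∈ D, ∃ W ∈ 𝓝 (g y y), y ∈ closure (D ∩ g y ⁻¹' Wᶜ) := fun y hy =>
      exists_mem_nhds_mem_closure_of_not_continuousWithinAt (fun _ hz => hz.1) hSD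
        (fun z hz => hcont z hz (g y) (hgF y hy)) (hg y hy)
    choose! W hW hDW using hgW
    obtain ⟨T, hTD, hTc, he₀T, hT⟩ := ht.exists_countable_subset_forall_mem_closure
      (fun y _ => inter_subset_left) hDW he₀
    obtain ⟨t, htT, htc⟩ := hF T hTc ⟨e₀, he₀T⟩
    have htW : t ∈ closure (T ∩ g t ⁻¹' (W t)ᶜ) := by
      refine closure_mono ?_ (hT t htT)
      exact fun _ hz => ⟨hz.2, hz.1.2⟩
    exact not_continuousWithinAt_of_mem_closure (hW t (hTD htT)) htW (htc _ (hgF t (hTD htT)))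
  · obtain ⟨y, hyS, hyD⟩ := not_subset.1 hSD
    refine ⟨(closure D)ᶜ, isClosed_closure.isOpen_compl, ⟨y, hyD, hyS⟩, fun f hf z hz => ?_⟩
    exact (hcont z ⟨hz.2, fun hzD => hz.1 (subset_closure hzD)⟩ f hf).mono inter_subset_right

theorem weaklyDiscFam_of_exists_isOpen_continuousOn {F : Set (X → Y)}
    (hF : ∀ S : Set X, S.Nonempty →
      ∃ O, IsOpen O ∧ (O ∩ S).Nonempty ∧ ∀ f ∈ F, ContinuousOn f (O ∩ S)) :
    WeaklyDiscFam F := by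
  intro A
  set 𝒪 := {O : Set X | IsOpen O ∧ ∀ f ∈ F, ContinuousOn f (O ∩ A)}
  set U := ⋃₀ 𝒪 ∩ A
  refine ⟨U, inter_subset_right, ⟨⋃₀ 𝒪, isOpen_sUnion fun O hO => hO.1, rfl⟩, fun a ha => ?_,
    fun f hf x ⟨⟨O, hO, hxO⟩, _⟩ => ?_⟩
  · by_contra haU
    obtain ⟨O, hO, ⟨x, hxO, hxA, hxU⟩, hOc⟩ := hF (A ∩ (closure U)ᶜ) ⟨a, ha, haU⟩
    have hO' : O ∩ (closure U)ᶜ ∈ 𝒪 := by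
      refine ⟨hO.inter isClosed_closure.isOpen_compl, fun f hf => (hOc f hf).mono ?_⟩
      exact fun y hy => ⟨hy.1.1, hy.2, hy.1.2⟩
    exact hxU (subset_closure ⟨⟨_, hO', hxO, hxU⟩, hxA⟩)
  · refine (hO.2 f hf x ⟨hxO, ‹_›⟩).mono_of_mem_nhdsWithin ?_
    exact mem_nhdsWithin.2 ⟨O, hO.1, hxO, fun y hy => ⟨hy.1, hy.2.2⟩⟩

end Discontinuity

/-- For any topological space `X` of countable tightness, each σ-convex subset `F` of the
space `SC*_p(X)` of bounded scatteredly continuous real-valued functions is a weakly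
discontinuous family. -/
theorem stmt7 {X : Type*} [TopologicalSpace X] (ht : CountablyTight X)
    (F : Set (X → ℝ)) (hF : ∀ f ∈ F, ScatCont f ∧ ∃ M : ℝ, ∀ x, |f x| ≤ M)
    (hσ : SigmaConvex F) :
    WeaklyDiscFam F :=
  weaklyDiscFam_of_exists_isOpen_continuousOn fun _ hS =>
    ht.exists_isOpen_forall_continuousOn
      (fun _ hT hne => exists_forall_continuousWithinAt_of_sigmaConvex hF hσ hT hne) hS
end

section
/- Let X and Y be topological spaces and F a family of functions from X to Y. If F is weakly discontinuous, then its decomposition number satisfies Dec(F) ≤ hl(X). -/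
open Set Filter Topology Cardinal

/-! Transfinitely remove from what is left of `X` a relatively open dense piece on which every
`f ∈ F` is continuous. A point chosen in each piece, together with the open set cutting out that
piece, forms a right-separated sequence. If such a sequence had length `hl(X)⁺`, a subcover of size
`hl(X)` of its separating neighbourhoods would only use indices bounded below `hl(X)⁺` (regularity
of successor cardinals), and the point beyond that bound would be uncovered. So the process empties
`X` after fewer than `hl(X)⁺` steps, and the pieces form the required cover. -/

universe u

theorem lindelofNum_spec (W : Type*) [TopologicalSpace W] :
    ℵ₀ ≤ lindelofNum W ∧ ∀ 𝒰 : Set (Set W), (∀ U ∈ 𝒰, IsOpen U) →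
      ⋃₀ 𝒰 = Set.univ → ∃ 𝒱 ⊆ 𝒰, #𝒱 ≤ lindelofNum W ∧ ⋃₀ 𝒱 = Set.univ :=
  csInf_mem (s := {κ | ℵ₀ ≤ κ ∧ _}) ⟨max #(Set W) ℵ₀, le_max_right _ _, fun 𝒰 _ hc =>
    ⟨𝒰, subset_rfl, (mk_set_le 𝒰).trans (le_max_left _ _), hc⟩⟩

theorem exists_card_le_lindelofNum_iUnion_nhds_eq_univ {W : Type*} [TopologicalSpace W]
    (N : W → Set W) (hN : ∀ z, IsOpen (N z)) (hzN : ∀ z, z ∈ N z) :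
    ∃ S : Set W, #S ≤ lindelofNum W ∧ ⋃ z ∈ S, N z = Set.univ := by
  obtain ⟨𝒱, h𝒱N, h𝒱card, h𝒱cov⟩ := (lindelofNum_spec W).2 (range N)
    (forall_mem_range.2 hN) (eq_univ_of_forall fun z => mem_sUnion_of_mem (hzN z) ⟨z, rfl⟩)
  choose c hc using fun V : 𝒱 => h𝒱N V.2
  refine ⟨range c, mk_range_le.trans h𝒱card, eq_univ_of_forall fun z => ?_⟩
  obtain ⟨V, hV𝒱, hzV⟩ := h𝒱cov ▸ mem_univ z
  exact mem_biUnion ⟨⟨V, hV𝒱⟩, rfl⟩ ((hc ⟨V, hV𝒱⟩).symm ▸ hzV)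

theorem lindelofNum_le_heredLindelofNum {X : Type*} [TopologicalSpace X] (Z : Set X) :
    lindelofNum Z ≤ heredLindelofNum X :=
  le_ciSup bddAbove_of_small Z

theorem aleph0_le_heredLindelofNum (X : Type*) [TopologicalSpace X] :
    ℵ₀ ≤ heredLindelofNum X :=
  (lindelofNum_spec (∅ : Set X)).1.trans (lindelofNum_le_heredLindelofNum ∅)

theorem card_le_heredLindelofNum_of_rightSeparated {X : Type u} [TopologicalSpace X]
    {o : Ordinal.{u}} (x : Iio o → X) (V : Iio o → Set X) (hV : ∀ β, IsOpen (V β))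
    (hxV : ∀ β, x β ∈ V β) (hsep : ∀ β γ, β < γ → x γ ∉ V β) :
    o.card ≤ heredLindelofNum X := by
  set μ := heredLindelofNum X
  by_contra! hμo
  set o' := (Order.succ μ).ord
  have ho' : o' ≤ o := ord_le.2 (Order.succ_le_of_lt hμo)
  set Z := x '' {β | β.1 < o'}
  choose β hβo hβx using fun z : Z => (z.2 : z.1 ∈ x '' {β | β.1 < o'})
  obtain ⟨S, hSμ, hS⟩ := exists_card_le_lindelofNum_iUnion_nhds_eq_univ
    (fun z : Z => Subtype.val ⁻¹' V (β z)) (fun z => (hV _).preimage continuous_subtype_val)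
    (fun z => by simpa only [mem_preimage, ← hβx z] using hxV (β z))
  -- `o'` has cofinality `succ μ > #S`, so the indices used by `S` are bounded below `o'`.
  have hγ : ⨆ z : S, (β z).1 + 1 < o' := by
    refine Ordinal.iSup_add_one_lt_of_lt_cof ?_ fun z => hβo z
    rw [(isRegular_succ (aleph0_le_heredLindelofNum X)).cof_ord]
    exact (hSμ.trans (lindelofNum_le_heredLindelofNum Z)).trans_lt (Order.lt_succ μ)
  set γ : Iio o := ⟨⨆ z : S, (β z).1 + 1, hγ.trans_le ho'⟩
  obtain ⟨z, hzS, hz⟩ : ∃ z ∈ S, x γ ∈ V (β z) := by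
    simpa only [mem_iUnion, mem_preimage, exists_prop] using
      eq_univ_iff_forall.1 hS ⟨x γ, mem_image_of_mem x hγ⟩
  exact hsep (β z) γ (Ordinal.lt_iSup_add_one (fun z : S => (β z).1) ⟨z, hzS⟩) hz

section TransfiniteRemainder

variable {X : Type u} (U : Set X → Set X)

noncomputable def transfiniteRemainder : Ordinal.{u} → Set X :=
  Ordinal.lt_wf.fix fun α R => (⋃ β : Iio α, U (R β.1 β.2))ᶜ

theorem transfiniteRemainder_eq (α : Ordinal.{u}) :
    transfiniteRemainder U α = (⋃ β : Iio α, U (transfiniteRemainder U β))ᶜ := by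
  rw [transfiniteRemainder, WellFounded.fix_eq]

theorem transfiniteRemainder_anti : Antitone (transfiniteRemainder U) := fun α β hαβ => by
  rw [transfiniteRemainder_eq U α, transfiniteRemainder_eq U β, compl_subset_compl]
  exact iUnion_subset fun γ => subset_iUnion_of_subset ⟨γ.1, γ.2.trans_le hαβ⟩ subset_rfl

theorem notMem_of_mem_transfiniteRemainder {α β : Ordinal.{u}} (hαβ : α < β) {x : X}
    (hx : x ∈ transfiniteRemainder U β) : x ∉ U (transfiniteRemainder U α) := by
  rw [transfiniteRemainder_eq U β] at hx
  exact fun hxα => hx (mem_iUnion.2 ⟨⟨α, hαβ⟩, hxα⟩)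

theorem iUnion_eq_univ_of_transfiniteRemainder_eq_empty {α : Ordinal.{u}}
    (hα : transfiniteRemainder U α = ∅) :
    ⋃ β : Iio α, U (transfiniteRemainder U β) = Set.univ := by
  rwa [transfiniteRemainder_eq, compl_empty_iff] at hα

end TransfiniteRemainder

theorem card_le_heredLindelofNum_of_transfiniteRemainder_nonempty {X : Type u}
    [TopologicalSpace X] {U : Set X → Set X} (hU : ∀ A, ∃ V, IsOpen V ∧ U A = V ∩ A)
    (hUne : ∀ A : Set X, A.Nonempty → (U A).Nonempty) {o : Ordinal.{u}}
    (ho : ∀ β < o, (transfiniteRemainder U β).Nonempty) :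
    o.card ≤ heredLindelofNum X := by
  choose V hV hUV using hU
  choose x hx using fun β : Iio o => hUne _ (ho β β.2)
  have hxVR : ∀ β : Iio o, x β ∈ V (transfiniteRemainder U β) ∩ transfiniteRemainder U β :=
    fun β => hUV _ ▸ hx β
  refine card_le_heredLindelofNum_of_rightSeparated x (fun β => V (transfiniteRemainder U β))
    (fun β => hV _) (fun β => (hxVR β).1) fun β γ hβγ hγ => ?_
  exact notMem_of_mem_transfiniteRemainder U hβγ (hxVR γ).2
    (hUV _ ▸ ⟨hγ, transfiniteRemainder_anti U hβγ.le (hxVR γ).2⟩)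

/-- Every weakly discontinuous family `F` of functions between topological spaces `X`, `Y`
has decomposition number `Dec(F) ≤ hl(X)`. -/
theorem stmt8 {X Y : Type*} [TopologicalSpace X] [TopologicalSpace Y]
    (F : Set (X → Y)) (h : WeaklyDiscFam F) :
    Dec F ≤ heredLindelofNum X := by
  choose U _ hUopen hAU hUcont using h
  have hUne : ∀ A : Set X, A.Nonempty → (U A).Nonempty := fun A ⟨_, ha⟩ =>
    closure_nonempty_iff.1 ⟨_, hAU A ha⟩
  set μ := heredLindelofNum X
  obtain ⟨α, hα, hαμ⟩ : ∃ α, transfiniteRemainder U α = ∅ ∧ α.card ≤ μ := by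
    by_contra! hlong
    have hsucc := card_le_heredLindelofNum_of_transfiniteRemainder_nonempty hUopen hUne
      (o := (Order.succ μ).ord) fun β hβ => nonempty_iff_ne_empty.2 fun h0 =>
        (hlong β h0).not_ge (Order.lt_succ_iff.1 (lt_ord.1 hβ))
    exact (Order.lt_succ μ).not_ge (by rwa [card_ord] at hsucc)
  set 𝒞 := range fun β : Iio α => U (transfiniteRemainder U β)
  have h𝒞 : ⋃₀ 𝒞 = Set.univ := by
    rw [sUnion_range, iUnion_eq_univ_of_transfiniteRemainder_eq_empty U hα]
  calc Dec F ≤ #𝒞 := csInf_le' ⟨𝒞, rfl, h𝒞, by rintro _ ⟨β, rfl⟩; exact hUcont _⟩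
    _ ≤ α.card := by
        simpa only [mk_Iio_ordinal, lift_lift, Cardinal.lift_le] using
          mk_range_le_lift (f := fun β : Iio α => U (transfiniteRemainder U β))
    _ ≤ μ := hαμ
end

section
/- Let X be a topological space, Y a regular topological space, and F a family of functions from X to Y. Then F is a scatteredly continuous family if and only if F is a weakly discontinuous family. -/
open Set Filter Topology Cardinal

section Aux
variable {X Y : Type*} [TopologicalSpace X] [TopologicalSpace Y]

/-- A nonempty "self-witnessing" set contradicts scattered continuity. -/
lemma scatContFam_selfwitness_empty {F : Set (X → Y)}
    (scat : ∀ A : Set X, A.Nonempty → ∃ a ∈ A, ∀ f ∈ F, ContinuousWithinAt f A a)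
    {S : Set X}
    (h : ∀ b ∈ S, ∃ f ∈ F, ∃ O : Set Y, IsOpen O ∧ f b ∈ O ∧
      b ∈ closure {x | x ∈ S ∧ f x ∉ closure O}) : S = ∅ := by
  by_contra hne
  rw [← Set.not_nonempty_iff_eq_empty, not_not] at hne
  obtain ⟨b, hbS, hb⟩ := scat S hne
  obtain ⟨f, hfF, O, hO, hfbO, hcl⟩ := h b hbS
  have hmem : f ⁻¹' O ∈ 𝓝[S] b := (hb f hfF).preimage_mem_nhdsWithin (hO.mem_nhds hfbO)
  obtain ⟨V, hVopen, hbV, hVS⟩ := mem_nhdsWithin.mp hmem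
  obtain ⟨x, hxV, hxS, hxO⟩ := mem_closure_iff.mp hcl V hVopen hbV
  exact hxO (subset_closure (hVS ⟨hxV, hxS⟩))

/-- Core lemma: for a scatteredly continuous family into a regular space,
every nonempty set contains a nonempty relatively open subset on which all
members of the family are continuous. -/
lemma scatContFam_core [RegularSpace Y] {F : Set (X → Y)}
    (scat : ∀ A : Set X, A.Nonempty → ∃ a ∈ A, ∀ f ∈ F, ContinuousWithinAt f A a)
    (A : Set X) (hA : A.Nonempty) :
    ∃ U : Set X, U.Nonempty ∧ (∃ V, IsOpen V ∧ U = V ∩ A) ∧ ∀ f ∈ F, ContinuousOn f U := by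
  by_contra hcon
  push_neg at hcon
  -- every nonempty relatively open subset of A is "bad"
  have hbad : ∀ U : Set X, U.Nonempty → (∃ V, IsOpen V ∧ U = V ∩ A) →
      ∃ f ∈ F, ∃ u ∈ U, ¬ ContinuousWithinAt f U u := by
    intro U h1 h2
    obtain ⟨f, hfF, hnc⟩ := hcon U h1 h2
    refine ⟨f, hfF, ?_⟩
    by_contra h'
    push_neg at h'
    exact hnc fun x hx => h' x hx
  -- Expansion lemma
  have EL : ∀ U : Set X, U.Nonempty → (∃ V, IsOpen V ∧ U = V ∩ A) →
      ∃ d ∈ U, ∃ f ∈ F, ∃ O : Set Y, ∃ W : Set X, IsOpen O ∧ f d ∈ O ∧ W.Nonempty ∧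
        (∃ V', IsOpen V' ∧ W = V' ∩ A) ∧ d ∈ closure W ∧ ∀ x ∈ W, f x ∉ closure O := by
    intro U hUne hUro
    obtain ⟨VU, hVUopen, hVU⟩ := hUro
    set D := {u : X | u ∈ U ∧ ∃ f ∈ F, ¬ ContinuousWithinAt f U u} with hD
    have hDsub : D ⊆ U := fun u hu => hu.1
    have hDne : D.Nonempty := by
      obtain ⟨f, hfF, u, huU, hnc⟩ := hbad U hUne ⟨VU, hVUopen, hVU⟩
      exact ⟨u, huU, f, hfF, hnc⟩
    obtain ⟨d, hdD, hdcont⟩ := scat D hDne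
    obtain ⟨hdU, f, hfF, hnc⟩ := hdD
    -- extract a neighbourhood of f d not pulled back
    have hNex : ∃ N ∈ 𝓝 (f d), f ⁻¹' N ∉ 𝓝[U] d := by
      by_contra h'
      push_neg at h'
      exact hnc fun s hs => h' s hs
    obtain ⟨N, hN, hpre⟩ := hNex
    obtain ⟨N', hN'mem, hN'closed, hN'sub⟩ := exists_mem_nhds_isClosed_subset hN
    set O := interior N' with hO
    have hOopen : IsOpen O := isOpen_interior
    have hfdO : f d ∈ O := mem_interior_iff_mem_nhds.mpr hN'mem
    have hclO : closure O ⊆ N :=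
      (closure_minimal interior_subset hN'closed).trans hN'sub
    set E := {x : X | x ∈ U ∧ f x ∉ closure O} with hE
    have hdE : d ∈ closure E := by
      rw [mem_closure_iff]
      intro G hG hdG
      by_contra hbad2
      rw [Set.not_nonempty_iff_eq_empty] at hbad2
      apply hpre
      refine mem_nhdsWithin.mpr ⟨G, hG, hdG, ?_⟩
      rintro x ⟨hxG, hxU⟩
      by_contra hxN
      have hxE : x ∈ E := ⟨hxU, fun hc => hxN (hclO hc)⟩
      exact (Set.eq_empty_iff_forall_notMem.mp hbad2 x) ⟨hxG, hxE⟩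
    have hpreD : f ⁻¹' O ∈ 𝓝[D] d :=
      (hdcont f hfF).preimage_mem_nhdsWithin (hOopen.mem_nhds hfdO)
    obtain ⟨V, hVopen, hdV, hVD⟩ := mem_nhdsWithin.mp hpreD
    -- points of E ∩ V are continuity points of all of F on U
    have key : ∀ s ∈ E ∩ V, ∃ G, IsOpen G ∧ s ∈ G ∧ ∀ x, x ∈ G ∩ U → f x ∉ closure O := by
      rintro s ⟨⟨hsU, hsE⟩, hsV⟩
      have hsnotD : s ∉ D := by
        intro hsD
        exact hsE (subset_closure (hVD ⟨hsV, hsD⟩))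
      have hcontAll : ∀ g ∈ F, ContinuousWithinAt g U s := by
        intro g hg
        by_contra hgc
        exact hsnotD ⟨hsU, g, hg, hgc⟩
      have hmemc : (closure O)ᶜ ∈ 𝓝 (f s) :=
        (isClosed_closure.isOpen_compl).mem_nhds hsE
      have := (hcontAll f hfF).preimage_mem_nhdsWithin hmemc
      obtain ⟨G, hGopen, hsG, hGsub⟩ := mem_nhdsWithin.mp this
      exact ⟨G, hGopen, hsG, fun x hx => hGsub hx⟩
    set GG := {G : Set X | IsOpen G ∧ ∀ x, x ∈ G ∩ U → f x ∉ closure O} with hGG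
    set W := (⋃₀ GG) ∩ U with hW
    have hWsep : ∀ x ∈ W, f x ∉ closure O := by
      rintro x ⟨⟨G, hG, hxG⟩, hxU⟩
      exact hG.2 x ⟨hxG, hxU⟩
    have hEVW : E ∩ V ⊆ W := by
      rintro s hs
      obtain ⟨G, h1, h2, h3⟩ := key s hs
      exact ⟨⟨G, ⟨h1, h3⟩, h2⟩, hs.1.1⟩
    have hEVne : (E ∩ V).Nonempty := by
      obtain ⟨x, hxV, hxE⟩ := mem_closure_iff.mp hdE V hVopen hdV
      exact ⟨x, hxE, hxV⟩
    have hdclW : d ∈ closure W := by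
      rw [mem_closure_iff]
      intro G hG hdG
      obtain ⟨x, hx, hxE⟩ := mem_closure_iff.mp hdE (G ∩ V) (hG.inter hVopen) ⟨hdG, hdV⟩
      exact ⟨x, hx.1, hEVW ⟨hxE, hx.2⟩⟩
    refine ⟨d, hdU, f, hfF, O, W, hOopen, hfdO, hEVne.mono hEVW,
      ⟨(⋃₀ GG) ∩ VU, (isOpen_sUnion fun G hG => hG.1).inter hVUopen, ?_⟩, hdclW, hWsep⟩
    rw [hW, hVU, Set.inter_assoc]
  -- choice functions over the subtype of nonempty relatively open subsets of A
  let RO := {U : Set X // U.Nonempty ∧ ∃ V, IsOpen V ∧ U = V ∩ A}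
  have EL' : ∀ R : RO, ∃ d : X, ∃ f : X → Y, ∃ O : Set Y, ∃ W : Set X,
      d ∈ R.1 ∧ f ∈ F ∧ IsOpen O ∧ f d ∈ O ∧ W.Nonempty ∧
        (∃ V', IsOpen V' ∧ W = V' ∩ A) ∧ d ∈ closure W ∧ ∀ x ∈ W, f x ∉ closure O := by
    rintro ⟨U, h1, h2⟩
    obtain ⟨d, hd, f, hf, O, W, props⟩ := EL U h1 h2
    exact ⟨d, f, O, W, hd, hf, props.1, props.2.1, props.2.2.1,
      props.2.2.2.1, props.2.2.2.2.1, props.2.2.2.2.2⟩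
  choose dd ff OO WW hdd hff hOO hffd hWne hWro hdcl hWsep using EL'
  -- child regions: for R ∈ RO and open V containing dd R, the set WW R ∩ V is again in RO
  have childmem : ∀ (R : RO) (V : Set X), IsOpen V → dd R ∈ V →
      (WW R ∩ V).Nonempty ∧ ∃ V', IsOpen V' ∧ WW R ∩ V = V' ∩ A := by
    intro R V hV hdV
    obtain ⟨V', hV', hWV'⟩ := hWro R
    constructor
    · obtain ⟨x, hxV, hxW⟩ := mem_closure_iff.mp (hdcl R) V hV hdV
      exact ⟨x, hxW, hxV⟩
    · exact ⟨V' ∩ V, hV'.inter hV, by rw [hWV', Set.inter_assoc, Set.inter_comm A V,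
        ← Set.inter_assoc]⟩
  -- iterate: tree of regions
  let 𝓡 : ℕ → Set RO := fun n => Nat.rec
    ({⟨A, hA, Set.univ, isOpen_univ, (Set.univ_inter A).symm⟩} : Set RO)
    (fun _ prev => {R' : RO | ∃ R ∈ prev, ∃ V : Set X, ∃ hV : IsOpen V, ∃ hdV : dd R ∈ V,
      R'.1 = WW R ∩ V}) n
  have h𝓡succ : ∀ n (R' : RO), R' ∈ 𝓡 (n+1) ↔
      ∃ R ∈ 𝓡 n, ∃ V : Set X, ∃ hV : IsOpen V, ∃ hdV : dd R ∈ V, R'.1 = WW R ∩ V :=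
    fun n R' => Iff.rfl
  set S := {x : X | ∃ n : ℕ, ∃ R ∈ 𝓡 n, dd R = x} with hS
  have hSsw : ∀ b ∈ S, ∃ f ∈ F, ∃ O : Set Y, IsOpen O ∧ f b ∈ O ∧
      b ∈ closure {x | x ∈ S ∧ f x ∉ closure O} := by
    rintro b ⟨n, R, hR, rfl⟩
    refine ⟨ff R, hff R, OO R, hOO R, hffd R, ?_⟩
    rw [mem_closure_iff]
    intro G hG hdG
    have hchild := childmem R G hG hdG
    set R' : RO := ⟨WW R ∩ G, hchild.1, hchild.2⟩ with hR'
    have hR'mem : R' ∈ 𝓡 (n+1) := ⟨R, hR, G, hG, hdG, rfl⟩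
    have hddR' : dd R' ∈ WW R ∩ G := hdd R'
    refine ⟨dd R', hddR'.2, ⟨n+1, R', hR'mem, rfl⟩, hWsep R (dd R') hddR'.1⟩
  have hSempty : S = ∅ := scatContFam_selfwitness_empty scat hSsw
  have : dd ⟨A, hA, Set.univ, isOpen_univ, (Set.univ_inter A).symm⟩ ∈ S :=
    ⟨0, _, rfl, rfl⟩
  rw [hSempty] at this
  exact this
end Aux

section Main
variable {X Y : Type*} [TopologicalSpace X] [TopologicalSpace Y]

theorem stmt11' [RegularSpace Y] (F : Set (X → Y)) :
    (∀ A : Set X, A.Nonempty → ∃ a ∈ A, ∀ f ∈ F, ContinuousWithinAt f A a) ↔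
    (∀ A : Set X, ∃ U : Set X, U ⊆ A ∧ (∃ V : Set X, IsOpen V ∧ U = V ∩ A) ∧
      A ⊆ closure U ∧ ∀ f ∈ F, ContinuousOn f U) := by
  constructor
  · -- scattered → weakly discontinuous
    intro scat A
    set Fam := {U : Set X | U ⊆ A ∧ (∃ V, IsOpen V ∧ U = V ∩ A) ∧
      ∀ f ∈ F, ContinuousOn f U} with hFam
    set U := ⋃₀ Fam with hU
    have hUA : U ⊆ A := fun x ⟨U', hU', hxU'⟩ => hU'.1 hxU'
    have hro : ∃ V, IsOpen V ∧ U = V ∩ A := by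
      refine ⟨⋃₀ {V : Set X | IsOpen V ∧ V ∩ A ∈ Fam}, isOpen_sUnion fun V hV => hV.1, ?_⟩
      apply Set.Subset.antisymm
      · rintro x ⟨U', hU', hxU'⟩
        obtain ⟨V', hV'open, hV'⟩ := hU'.2.1
        refine ⟨⟨V', ⟨hV'open, hV' ▸ hU'⟩, hV' ▸ hxU' |>.1⟩, hU'.1 hxU'⟩
      · rintro x ⟨⟨V', hV', hxV'⟩, hxA⟩
        exact ⟨V' ∩ A, hV'.2, hxV', hxA⟩
    have hdense : A ⊆ closure U := by
      intro a ha
      by_contra hna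
      have hBne : ((closure U)ᶜ ∩ A).Nonempty := ⟨a, hna, ha⟩
      obtain ⟨U'', hU''ne, ⟨V'', hV''open, hV''⟩, hcont''⟩ :=
        scatContFam_core scat ((closure U)ᶜ ∩ A) hBne
      have hU''Fam : U'' ∈ Fam := by
        refine ⟨by rw [hV'']; exact fun x hx => hx.2.2, ?_, hcont''⟩
        exact ⟨V'' ∩ (closure U)ᶜ, hV''open.inter isClosed_closure.isOpen_compl,
          by rw [hV'', Set.inter_assoc]⟩
      obtain ⟨x, hxU''⟩ := hU''ne
      have hxU : x ∈ U := ⟨U'', hU''Fam, hxU''⟩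
      have : x ∈ (closure U)ᶜ := by rw [hV''] at hxU''; exact hxU''.2.1
      exact this (subset_closure hxU)
    refine ⟨U, hUA, hro, hdense, ?_⟩
    intro f hf x hxU
    obtain ⟨U', hU', hxU'⟩ := hxU
    obtain ⟨V', hV'open, hV'⟩ := hU'.2.1
    have hU'mem : U' ∈ 𝓝[U] x := by
      refine mem_nhdsWithin.mpr ⟨V', hV'open, (hV' ▸ hxU').1, ?_⟩
      rintro y ⟨hyV, hyU⟩
      rw [hV']
      exact ⟨hyV, hUA hyU⟩
    exact (hU'.2.2 f hf x hxU').mono_of_mem_nhdsWithin hU'mem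
  · -- weakly discontinuous → scattered
    intro wd A hA
    obtain ⟨U, hUA, ⟨V, hVopen, hUV⟩, hdense, hcont⟩ := wd A
    have hUne : U.Nonempty := by
      obtain ⟨a, ha⟩ := hA
      rcases Set.eq_empty_or_nonempty U with h | h
      · rw [h, closure_empty] at hdense
        exact absurd (hdense ha) (Set.notMem_empty a)
      · exact h
    obtain ⟨a, haU⟩ := hUne
    refine ⟨a, hUA haU, fun f hf => ?_⟩
    have haV : a ∈ V := (hUV ▸ haU).1
    have hUmem : U ∈ 𝓝[A] a := by
      rw [hUV]
      exact Filter.mem_of_superset (inter_mem_nhdsWithin A (hVopen.mem_nhds haV))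
        fun y hy => ⟨hy.2, hy.1⟩
    exact (hcont f hf a haU).mono_of_mem_nhdsWithin hUmem
end Main

/-- For a topological space `X` and a regular topological space `Y`, a function family
`F ⊆ Y^X` is scatteredly continuous if and only if it is weakly discontinuous. -/
theorem stmt11 {X Y : Type*} [TopologicalSpace X] [TopologicalSpace Y] [RegularSpace Y]
    (F : Set (X → Y)) :
    ScatContFam F ↔ WeaklyDiscFam F :=
  stmt11' F
end

section
/- Let X be an infinite T1 topological space. Then the spread, the network weight and the weight of the function space SC_p(X) all equal the cardinality of X: s(SC_p(X)) = nw(SC_p(X)) = w(SC_p(X)) = |X|. -/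
/-!
The indicators of the points of `X` are scatteredly continuous because `X` is T₁, and the open
sets `{g | 0 < g x}` show that they form a discrete subspace of size `|X|`; hence `|X| ≤ s`.
In every space `s ≤ nw ≤ w`, since a network must isolate each point of a discrete subspace by a
member of its own. Finally, every subspace of `ℝ^X` has weight at most `|X|`, because the
cylinders over finite subsets of `X` with sides in a countable base of `ℝ` form a base of `ℝ^X`.
-/

open Set Filter Topology Cardinal

open TopologicalSpace

universe u

section CardinalFunctions

variable {Z : Type*} [TopologicalSpace Z]

lemma TopologicalSpace.IsTopologicalBasis.isNetwork {B : Set (Set Z)}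
    (hB : IsTopologicalBasis B) : IsNetwork B :=
  fun _ _ hU hx => hB.exists_subset_of_mem_open hx hU

lemma TopologicalSpace.IsTopologicalBasis.wt_le {B : Set (Set Z)} (hB : IsTopologicalBasis B) :
    wt Z ≤ max #B ℵ₀ :=
  csInf_le' ⟨B, hB, rfl⟩

lemma IsNetwork.netWt_le {N : Set (Set Z)} (hN : IsNetwork N) : netWt Z ≤ max #N ℵ₀ :=
  csInf_le' ⟨N, hN, rfl⟩

variable (Z) in
lemma exists_isTopologicalBasis_wt_eq :
    ∃ B : Set (Set Z), IsTopologicalBasis B ∧ wt Z = max #B ℵ₀ :=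
  csInf_mem (s := {c | ∃ B : Set (Set Z), IsTopologicalBasis B ∧ c = max #B ℵ₀})
    ⟨_, _, isTopologicalBasis_opens, rfl⟩

variable (Z) in
lemma exists_isNetwork_netWt_eq : ∃ N : Set (Set Z), IsNetwork N ∧ netWt Z = max #N ℵ₀ :=
  csInf_mem (s := {c | ∃ N : Set (Set Z), IsNetwork N ∧ c = max #N ℵ₀})
    ⟨_, Set.univ, fun _ U _ hx => ⟨U, trivial, hx, subset_rfl⟩, rfl⟩

variable (Z) in
lemma netWt_le_wt : netWt Z ≤ wt Z := by
  obtain ⟨B, hB, hwt⟩ := exists_isTopologicalBasis_wt_eq Z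
  exact hwt ▸ hB.isNetwork.netWt_le

lemma wt_subtype_le (S : Set Z) : wt S ≤ wt Z := by
  obtain ⟨B, hB, hwt⟩ := exists_isTopologicalBasis_wt_eq Z
  exact hwt ▸ (hB.isInducing IsInducing.subtypeVal).wt_le.trans (max_le_max_right _ mk_image_le)

lemma IsNetwork.exists_inter_subset_singleton {N : Set (Set Z)} (hN : IsNetwork N)
    {D : Set Z} [DiscreteTopology D] (d : D) : ∃ n ∈ N, (d : Z) ∈ n ∧ n ∩ D ⊆ {(d : Z)} := by
  obtain ⟨U, hU, hUd⟩ := isOpen_induced_iff.mp (isOpen_discrete {d})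
  have hdU : (d : Z) ∈ U := show d ∈ Subtype.val ⁻¹' U by rw [hUd]; rfl
  obtain ⟨n, hnN, hdn, hnU⟩ := hN d U hU hdU
  refine ⟨n, hnN, hdn, fun z ⟨hzn, hzD⟩ => ?_⟩
  have : (⟨z, hzD⟩ : D) ∈ Subtype.val ⁻¹' U := hnU hzn
  rw [hUd, Set.mem_singleton_iff] at this
  exact congrArg Subtype.val this

lemma IsNetwork.mk_le_of_discreteTopology {N : Set (Set Z)} (hN : IsNetwork N)
    (D : Set Z) [DiscreteTopology D] : #D ≤ #N := by
  choose n hnN hdn hnD using hN.exists_inter_subset_singleton (D := D)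
  refine mk_le_of_injective (f := fun d => (⟨n d, hnN d⟩ : N)) fun d e hde => ?_
  have hen : (e : Z) ∈ n d := by rw [show n d = n e from congrArg Subtype.val hde]; exact hdn e
  exact Subtype.ext (hnD d ⟨hen, e.2⟩).symm

variable (Z) in
lemma spread_le_netWt : spread Z ≤ netWt Z := by
  obtain ⟨N, hN, hnw⟩ := exists_isNetwork_netWt_eq Z
  refine csSup_le' ?_
  rintro _ ⟨D, hD, rfl⟩
  exact hnw ▸ (hN.mk_le_of_discreteTopology D).trans (le_max_left _ _)

lemma le_spread (D : Set Z) [DiscreteTopology D] : #D ≤ spread Z :=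
  le_csSup ⟨#Z, by rintro _ ⟨D, _, rfl⟩; exact mk_set_le D⟩ ⟨D, ‹_›, rfl⟩

lemma mk_le_spread_of_forall_mem_iff {ι Z : Type u} [TopologicalSpace Z] {e : ι → Z}
    {U : ι → Set Z} (hU : ∀ i, IsOpen (U i)) (he : ∀ i j, e j ∈ U i ↔ j = i) :
    #ι ≤ spread Z := by
  have he_inj : e.Injective := fun i j hij => ((he j i).mp (hij ▸ (he j j).mpr rfl))
  have : DiscreteTopology (range e) := by
    refine discreteTopology_iff_isOpen_singleton.mpr ?_
    rintro ⟨_, i, rfl⟩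
    convert (hU i).preimage continuous_subtype_val
    ext ⟨_, j, rfl⟩
    simp [he, Subtype.ext_iff, he_inj.eq_iff]
  exact (mk_range_eq e he_inj).symm.le.trans (le_spread _)

end CardinalFunctions

lemma pi_basis_subset_range_biInter_preimage_eval {X Y : Type*} [DecidableEq X] (T : Set (Set Y)) :
    {S | ∃ (U : X → Set Y) (F : Finset X), (∀ i ∈ F, U i ∈ T) ∧ S = (F : Set X).pi U} ⊆
      range fun s : Finset (X × T) => ⋂ t ∈ s, Function.eval t.1 ⁻¹' (t.2 : Set Y) := by
  rintro _ ⟨U, F, hU, rfl⟩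
  refine ⟨F.attach.image fun i : F => ((i : X), ⟨U i, hU i i.2⟩), ?_⟩
  ext f
  simp only [mem_iInter, mem_preimage, Finset.mem_image, Finset.mem_attach, true_and,
    Subtype.exists, Set.mem_pi, Finset.mem_coe]
  exact ⟨fun h i hi => h _ ⟨i, hi, rfl⟩, fun h _ ⟨i, hi, hti⟩ => hti ▸ h i hi⟩

lemma wt_pi_le {X : Type u} [Infinite X] (Y : Type*) [TopologicalSpace Y]
    [SecondCountableTopology Y] : wt (X → Y) ≤ Cardinal.lift #X := by
  classical
  have hX : ℵ₀ ≤ Cardinal.lift #X := by simp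
  have hT : #(countableBasis Y) ≤ ℵ₀ := mk_le_aleph0_iff.mpr (countable_countableBasis Y).to_subtype
  refine (isTopologicalBasis_pi fun _ : X => isBasis_countableBasis Y).wt_le.trans
    (max_le ?_ hX)
  calc _ ≤ #(Finset (X × countableBasis Y)) :=
        (mk_le_mk_of_subset (pi_basis_subset_range_biInter_preimage_eval _)).trans mk_range_le
    _ ≤ #(List (X × countableBasis Y)) := mk_le_of_surjective List.toFinset_surjective
    _ ≤ max ℵ₀ #(X × countableBasis Y) := mk_list_le_max _
    _ ≤ Cardinal.lift #X := by
      refine max_le hX ?_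
      rw [mk_prod]
      exact (mul_le_mul_right (lift_le_aleph0.mpr hT) _).trans_eq (mul_aleph0_eq hX)

lemma scatCont_indicator_singleton {X Y : Type*} [TopologicalSpace X] [T1Space X]
    [TopologicalSpace Y] [Zero Y] (x : X) (f : X → Y) : ScatCont (({x} : Set X).indicator f) := by
  intro A ⟨a, ha⟩
  by_cases hA : A ⊆ {x}
  · exact ⟨a, ha, continuousWithinAt_singleton.mono fun b hb => (hA hb).trans (hA ha).symm⟩
  · obtain ⟨b, hb, hbx⟩ := Set.not_subset.mp hA
    refine ⟨b, hb, (continuousAt_const (y := (0 : Y)).congr ?_).continuousWithinAt⟩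
    filter_upwards [isOpen_compl_singleton.mem_nhds hbx] with y hy
    exact (Set.indicator_of_notMem hy f).symm

/-- For any infinite `T₁`-space `X`: `s(SC_p(X)) = nw(SC_p(X)) = w(SC_p(X)) = |X|`. -/
theorem stmt12 {X : Type*} [TopologicalSpace X] [T1Space X] [Infinite X] :
    spread {f : X → ℝ | ScatCont f} = #X ∧
    netWt {f : X → ℝ | ScatCont f} = #X ∧
    wt {f : X → ℝ | ScatCont f} = #X := by
  set S := {f : X → ℝ | ScatCont f}
  have hX_le : #X ≤ spread S := by
    refine mk_le_spread_of_forall_mem_iff (e := fun x => ⟨({x} : Set X).indicator 1,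
      scatCont_indicator_singleton x 1⟩) (U := fun x => {g : S | 0 < (g : X → ℝ) x})
      (fun x => isOpen_lt continuous_const ((continuous_apply x).comp continuous_subtype_val)) ?_
    intro x y
    by_cases h : x = y <;> simp [Set.indicator, h, eq_comm]
  have hs_le := spread_le_netWt S
  have hnw_le := netWt_le_wt S
  have hwt_le : wt S ≤ #X := (wt_subtype_le S).trans (by simpa using wt_pi_le (X := X) ℝ)
  exact ⟨le_antisymm (hs_le.trans (hnw_le.trans hwt_le)) hX_le,
    le_antisymm (hnw_le.trans hwt_le) (hX_le.trans hs_le),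
    le_antisymm hwt_le (hX_le.trans (hs_le.trans hnw_le))⟩
end

section
/- Let X be a T1 topological space. For each a ∈ X, the characteristic function δ_a : X → ℝ of the singleton {a} (δ_a(x) = 1 if x = a and 0 otherwise) is scatteredly continuous, and the set D = { δ_a : a ∈ X } is a discrete subspace of SC_p(X) of cardinality |X|. -/
open Set Filter Topology Cardinal

/-- The characteristic function of a singleton `{a}` of a `T₁`-space. -/
def deltaFn {X : Type*} [DecidableEq X] (a : X) : X → ℝ := fun x => if x = a then 1 else 0

theorem deltaFn_injective {X : Type*} [DecidableEq X] :
    Function.Injective (deltaFn (X := X)) := by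
  intro a b hab
  simpa [deltaFn] using congrFun hab a

theorem ScatCont.of_continuousAt_of_ne {X Y : Type*} [TopologicalSpace X] [TopologicalSpace Y]
    {f : X → Y} (a : X) (hf : ∀ x ≠ a, ContinuousAt f x) : ScatCont f := by
  intro A hA
  by_cases h : ∃ b ∈ A, b ≠ a
  · obtain ⟨b, hb, hba⟩ := h
    exact ⟨b, hb, (hf b hba).continuousWithinAt⟩
  · push Not at h
    obtain ⟨x, hx⟩ := hA
    exact ⟨a, h x hx ▸ hx, continuousWithinAt_singleton.mono fun y hy => h y hy⟩

theorem continuousAt_deltaFn_of_ne {X : Type*} [TopologicalSpace X] [T1Space X] [DecidableEq X]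
    {a b : X} (h : b ≠ a) : ContinuousAt (deltaFn a) b :=
  continuousAt_const.congr <|
    Filter.mem_of_superset (isOpen_compl_singleton.mem_nhds h) fun _ hx => (if_neg hx).symm

theorem discreteTopology_range_deltaFn {X : Type*} [DecidableEq X] :
    DiscreteTopology (Set.range (deltaFn (X := X))) := by
  rw [discreteTopology_iff_isOpen_singleton]
  rintro ⟨_, a, rfl⟩
  refine isOpen_induced_iff.mpr
    ⟨{g | 1 / 2 < g a}, isOpen_lt continuous_const (continuous_apply a), ?_⟩
  ext ⟨_, b, rfl⟩
  rw [mem_preimage, mem_singleton_iff, Subtype.ext_iff, deltaFn_injective.eq_iff]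
  by_cases hab : b = a
  · norm_num [hab, deltaFn]
  · simp [deltaFn, Ne.symm hab, hab]

/-- For a `T₁`-space `X`, each characteristic function `δ_a` of a singleton is scatteredly
continuous, and the set `D = {δ_a : a ∈ X}` is a discrete subspace of `SC_p(X)` of
cardinality `|X|`. -/
theorem stmt13 {X : Type*} [TopologicalSpace X] [T1Space X] [DecidableEq X] :
    (∀ a : X, ScatCont (deltaFn a)) ∧
    DiscreteTopology (Set.range (deltaFn (X := X))) ∧
    #(Set.range (deltaFn (X := X))) = #X :=
  ⟨fun a => ScatCont.of_continuousAt_of_ne a fun _ => continuousAt_deltaFn_of_ne,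
    discreteTopology_range_deltaFn, mk_range_eq _ deltaFn_injective⟩
end

section
/- Let X be a T1 topological space. Then the decomposition number Dec(SC_p(X)) of the whole family SC_p(X) equals the decomposition number Dec(D) of the family D = { δ_a : a ∈ X } of characteristic functions of singletons, and both equal ddec(X), the smallest cardinality of a cover of X by discrete subspaces. -/
open Set Filter Topology Cardinal

/-- The smallest cardinality of a cover of `X` by discrete subspaces. -/
noncomputable def ddec (X : Type*) [TopologicalSpace X] : Cardinal :=
  sInf { c : Cardinal | ∃ 𝒞 : Set (Set X), c = #𝒞 ∧ ⋃₀ 𝒞 = Set.univ ∧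
    ∀ C ∈ 𝒞, DiscreteTopology C }

lemma contOn_of_discrete {X : Type*} [TopologicalSpace X] {C : Set X}
    (hC : DiscreteTopology C) (f : X → ℝ) : ContinuousOn f C := by
  intro x hx
  have h := (discreteTopology_subtype_iff).mp hC x hx
  have hbot : 𝓝[C \ {x}] x = ⊥ := by
    refine le_bot_iff.mp ?_
    rw [← h]
    refine le_inf (nhdsWithin_mono x fun y hy => hy.2) ?_
    exact le_principal_iff.mpr (Filter.mem_of_superset self_mem_nhdsWithin fun y hy => hy.1)
  have hle : 𝓝[C] x ≤ pure x := by
    have hsub : C ⊆ (C \ {x}) ∪ {x} := by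
      intro y hy; by_cases hxy : y = x <;> simp [hxy, hy]
    calc 𝓝[C] x ≤ 𝓝[(C \ {x}) ∪ {x}] x := nhdsWithin_mono _ hsub
      _ = 𝓝[C \ {x}] x ⊔ 𝓝[{x}] x := nhdsWithin_union _ _ _
      _ = pure x := by rw [hbot, nhdsWithin_singleton]; simp
  exact Tendsto.mono_left (tendsto_pure_nhds f x) hle

lemma discrete_of_delta {X : Type*} [TopologicalSpace X] [T1Space X] [DecidableEq X]
    {C : Set X} (h : ∀ a : X, ContinuousOn (deltaFn a) C) : DiscreteTopology C := by
  rw [discreteTopology_subtype_iff]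
  intro x hx
  have hc : ContinuousWithinAt (deltaFn x) C x := h x x hx
  have h1 : deltaFn x x = 1 := by simp [deltaFn]
  have hmem : (deltaFn x) ⁻¹' Set.Ioi (1/2 : ℝ) ∈ 𝓝[C] x := by
    apply hc
    rw [h1]
    exact Ioi_mem_nhds (by norm_num)
  have hsing : {x} ∈ 𝓝[C] x := by
    refine Filter.mem_of_superset hmem ?_
    intro y hy
    by_contra hne
    simp only [Set.mem_singleton_iff] at hne
    have : deltaFn x y = 0 := by simp [deltaFn, hne]
    simp [Set.mem_preimage, this] at hy
    linarith
  have hF : 𝓝[≠] x ⊓ 𝓟 C ≤ 𝓝[C] x := by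
    rw [nhdsWithin]
    exact inf_le_inf_right _ nhdsWithin_le_nhds
  have h1' : {x} ∈ 𝓝[≠] x ⊓ 𝓟 C := hF hsing
  have h2' : ({x} : Set X)ᶜ ∈ 𝓝[≠] x ⊓ 𝓟 C :=
    Filter.mem_inf_of_left self_mem_nhdsWithin
  rw [← Filter.empty_mem_iff_bot]
  have := Filter.inter_mem h1' h2'
  simpa using this

lemma scatCont_delta {X : Type*} [TopologicalSpace X] [T1Space X] [DecidableEq X]
    (a : X) : ScatCont (deltaFn a) := by
  intro A hA
  by_cases hb : ∃ b ∈ A, b ≠ a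
  · obtain ⟨b, hbA, hba⟩ := hb
    refine ⟨b, hbA, ?_⟩
    have h0 : deltaFn a b = 0 := by simp [deltaFn, hba]
    have heq : deltaFn a =ᶠ[𝓝[A] b] fun _ => (0 : ℝ) := by
      have : ({a} : Set X)ᶜ ∈ 𝓝[A] b :=
        mem_nhdsWithin_of_mem_nhds (isOpen_compl_singleton.mem_nhds (by simpa using hba))
      filter_upwards [this] with y hy
      simp only [Set.mem_compl_iff, Set.mem_singleton_iff] at hy
      simp [deltaFn, hy]
    unfold ContinuousWithinAt
    rw [h0]
    exact Filter.Tendsto.congr' heq.symm tendsto_const_nhds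
  · push_neg at hb
    obtain ⟨b, hbA⟩ := hA
    have hba : b = a := hb b hbA
    refine ⟨b, hbA, ?_⟩
    have hsub : A ⊆ {b} := by intro y hy; simp [hb y hy, hba]
    have hle : 𝓝[A] b ≤ pure b := by
      calc 𝓝[A] b ≤ 𝓝[{b}] b := nhdsWithin_mono _ hsub
        _ = pure b := nhdsWithin_singleton _
    exact Tendsto.mono_left (tendsto_pure_nhds _ b) hle

/-- For a `T₁`-space `X`, the decomposition number of the whole family `SC_p(X)` equals the
decomposition number of the family `D = {δ_a : a ∈ X}` of characteristic functions of
singletons, and both equal `ddec(X)`, the smallest cardinality of a cover of `X` by discrete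
subspaces. -/
theorem stmt14 {X : Type*} [TopologicalSpace X] [T1Space X] [DecidableEq X] :
    Dec {f : X → ℝ | ScatCont f} = Dec (Set.range (deltaFn (X := X))) ∧
    Dec {f : X → ℝ | ScatCont f} = ddec X := by
  -- singleton cover as nonemptiness witness
  have hsingdisc : ∀ x : X, DiscreteTopology (({x} : Set X)) := by
    intro x
    rw [discreteTopology_subtype_iff]
    intro y hy
    simp only [Set.mem_singleton_iff] at hy
    subst hy
    rw [← Filter.empty_mem_iff_bot]
    have h1 : ({y}ᶜ : Set X) ∈ 𝓝[≠] y ⊓ 𝓟 ({y} : Set X) :=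
      Filter.mem_inf_of_left self_mem_nhdsWithin
    have h2 : ({y} : Set X) ∈ 𝓝[≠] y ⊓ 𝓟 ({y} : Set X) :=
      Filter.mem_inf_of_right (Filter.mem_principal_self _)
    simpa using Filter.inter_mem h1 h2
  have hcov : ⋃₀ (Set.range (fun x : X => ({x} : Set X))) = Set.univ := by
    ext x; simp
  have hne_dd : {c : Cardinal | ∃ 𝒞 : Set (Set X), c = #𝒞 ∧ ⋃₀ 𝒞 = Set.univ ∧
      ∀ C ∈ 𝒞, DiscreteTopology C}.Nonempty := by
    refine ⟨_, Set.range (fun x : X => ({x} : Set X)), rfl, hcov, ?_⟩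
    rintro C ⟨x, rfl⟩; exact hsingdisc x
  have hne_D : {c : Cardinal | ∃ 𝒞 : Set (Set X), c = #𝒞 ∧ ⋃₀ 𝒞 = Set.univ ∧
      ∀ C ∈ 𝒞, ∀ f ∈ Set.range (deltaFn (X := X)), ContinuousOn f C}.Nonempty := by
    refine ⟨_, Set.range (fun x : X => ({x} : Set X)), rfl, hcov, ?_⟩
    rintro C ⟨x, rfl⟩ f _
    exact contOn_of_discrete (hsingdisc x) f
  have hne_SC : {c : Cardinal | ∃ 𝒞 : Set (Set X), c = #𝒞 ∧ ⋃₀ 𝒞 = Set.univ ∧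
      ∀ C ∈ 𝒞, ∀ f ∈ {f : X → ℝ | ScatCont f}, ContinuousOn f C}.Nonempty := by
    refine ⟨_, Set.range (fun x : X => ({x} : Set X)), rfl, hcov, ?_⟩
    rintro C ⟨x, rfl⟩ f _
    exact contOn_of_discrete (hsingdisc x) f
  -- Dec SC ≤ ddec
  have h1 : Dec {f : X → ℝ | ScatCont f} ≤ ddec X := by
    apply le_csInf hne_dd
    rintro c ⟨𝒞, rfl, hc, hd⟩
    apply csInf_le (OrderBot.bddBelow _)
    exact ⟨𝒞, rfl, hc, fun C hC f _ => contOn_of_discrete (hd C hC) f⟩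
  -- ddec ≤ Dec D
  have h2 : ddec X ≤ Dec (Set.range (deltaFn (X := X))) := by
    apply le_csInf hne_D
    rintro c ⟨𝒞, rfl, hc, hd⟩
    apply csInf_le (OrderBot.bddBelow _)
    exact ⟨𝒞, rfl, hc, fun C hC =>
      discrete_of_delta (fun a => hd C hC (deltaFn a) ⟨a, rfl⟩)⟩
  -- Dec D ≤ Dec SC
  have h3 : Dec (Set.range (deltaFn (X := X))) ≤ Dec {f : X → ℝ | ScatCont f} := by
    apply le_csInf hne_SC
    rintro c ⟨𝒞, rfl, hc, hd⟩
    apply csInf_le (OrderBot.bddBelow _)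
    refine ⟨𝒞, rfl, hc, fun C hC f hf => ?_⟩
    obtain ⟨a, rfl⟩ := hf
    exact hd C hC (deltaFn a) (scatCont_delta a)
  have e1 : Dec {f : X → ℝ | ScatCont f} = ddec X :=
    le_antisymm h1 (h2.trans h3)
  exact ⟨le_antisymm (h1.trans h2) h3, e1⟩
end

section
/- Every zero-dimensional separable Rosenthal compact space K is homeomorphic to a compact subset of the function space SC_p(ω^ω), where ω^ω is the Baire space ℕ^ℕ of irrationals. -/
open Set Filter Topology Cardinal

/-- A real-valued function on a topological space is of the first Baire class if it is a
pointwise limit of a sequence of continuous functions. -/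
def IsBaireOne {P : Type*} [TopologicalSpace P] (f : P → ℝ) : Prop :=
  ∃ g : ℕ → P → ℝ, (∀ n, Continuous (g n)) ∧ ∀ x, Tendsto (fun n => g n x) atTop (𝓝 (f x))

/-!
Fix an embedding `φ` of `K` into `B₁(P)` and a countable dense set `D ⊆ K`. A clopen subset of
`K` is compact and open, hence of the form `{k | (φ k (p j))ⱼ ∈ V}` for a sequence `p` of points of
`P` and a finite union `V` of rational boxes in `ℝ^ℕ`. Coding also its complement, together with a
finite certificate that the two cover `K`, gives a point of the Polish space `ℕ × P^ℕ`. Whether a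
point is such a code can be tested on `D` alone, so these codes form a Borel, hence analytic, set:
the range of a continuous `σ : ω^ω → ℕ × P^ℕ`. Let `W z` be the clopen set coded by `σ z`. Since the
`φ k` are of the first Baire class, `{z | k ∈ W z}` and its complement are `G_δ`, so by the Baire
category theorem its indicator is scatteredly continuous; and `k ↦ (z ↦ [k ∈ W z])` is an embedding,
as clopen sets separate the points of `K`.
-/

section BaireOne

variable {X : Type*} [TopologicalSpace X] {f : X → ℝ}

lemma IsBaireOne.neg (hf : IsBaireOne f) : IsBaireOne (-f) := by
  obtain ⟨g, hg, hlim⟩ := hf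
  exact ⟨fun n => -g n, fun n => (hg n).neg, fun x => (hlim x).neg⟩

lemma IsBaireOne.comp_continuous {Y : Type*} [TopologicalSpace Y] (hf : IsBaireOne f)
    {h : Y → X} (hh : Continuous h) : IsBaireOne (f ∘ h) := by
  obtain ⟨g, hg, hlim⟩ := hf
  exact ⟨fun n => g n ∘ h, fun n => (hg n).comp hh, fun y => hlim (h y)⟩

lemma IsBaireOne.isGδ_setOf_le (hf : IsBaireOne f) (a : ℝ) : IsGδ {x | f x ≤ a} := by
  obtain ⟨g, hg, hlim⟩ := hf
  have key : {x | f x ≤ a} = ⋂ m : ℕ, ⋂ N : ℕ, ⋃ n ≥ N, {x | g n x < a + 1 / (m + 1)} := by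
    ext x
    simp only [mem_ofPred_eq, mem_iInter, mem_iUnion, exists_prop]
    constructor
    · intro hx m
      have hlt : f x < a + 1 / (m + 1) := by linarith [Nat.one_div_pos_of_nat (α := ℝ) (n := m)]
      exact frequently_atTop.1 ((hlim x).eventually (gt_mem_nhds hlt)).frequently
    · intro hx
      by_contra! hax
      obtain ⟨m, hm⟩ := exists_nat_one_div_lt (sub_pos.2 hax)
      obtain ⟨N, hN⟩ := eventually_atTop.1
        ((hlim x).eventually (lt_mem_nhds (show a + 1 / (m + 1) < f x by linarith)))
      obtain ⟨n, hnN, hn⟩ := hx m N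
      exact (hN n hnN).not_gt hn
  rw [key]
  exact IsGδ.iInter fun m => IsGδ.iInter_of_isOpen fun N => isOpen_biUnion fun n _ =>
    isOpen_lt (hg n) continuous_const

lemma IsBaireOne.isGδ_setOf_ge (hf : IsBaireOne f) (b : ℝ) : IsGδ {x | b ≤ f x} := by
  simpa only [Pi.neg_apply, neg_le_neg_iff] using hf.neg.isGδ_setOf_le (-b)

lemma IsBaireOne.isGδ_compl_preimage_Ioo (hf : IsBaireOne f) (a b : ℝ) :
    IsGδ (f ⁻¹' Ioo a b)ᶜ := by
  have : (f ⁻¹' Ioo a b)ᶜ = {x | f x ≤ a} ∪ {x | b ≤ f x} := by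
    ext x; simp only [mem_compl_iff, mem_preimage, mem_Ioo, not_and_or, not_lt]; rfl
  rw [this]
  exact (hf.isGδ_setOf_le a).union (hf.isGδ_setOf_ge b)

end BaireOne

lemma exists_isOpen_subset_or_subset_compl {Y : Type*} [TopologicalSpace Y] [BaireSpace Y]
    [Nonempty Y] {A : Set Y} (hA : IsGδ A) (hAc : IsGδ Aᶜ) :
    ∃ U, IsOpen U ∧ U.Nonempty ∧ (U ⊆ A ∨ U ⊆ Aᶜ) := by
  by_contra! h
  have hdense : Dense A ∧ Dense Aᶜ := by
    simp only [dense_iff_inter_open]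
    refine ⟨fun U hU hne => ?_, fun U hU hne => ?_⟩
    · obtain ⟨y, hyU, hyA⟩ := not_subset.1 (h U hU hne).2
      exact ⟨y, hyU, not_not.1 hyA⟩
    · exact not_subset.1 (h U hU hne).1
  simpa using (hdense.1.inter_of_Gδ hA hAc hdense.2).nonempty

/-- By the Baire category theorem in the closure of `B`, one of `A`, `Aᶜ` contains a nonempty
relatively open part of `B`, on which the indicator is constant. -/
lemma scatCont_indicator_of_isGδ {X : Type*} [TopologicalSpace X]
    [TopologicalSpace.IsCompletelyMetrizableSpace X] {A : Set X} (hA : IsGδ A) (hAc : IsGδ Aᶜ) : ScatCont (A.indicator (1 : X → ℝ)) := by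
  intro B hB
  have := (isClosed_closure (s := B)).isCompletelyMetrizableSpace
  have : Nonempty (closure B) := hB.closure.to_subtype
  obtain ⟨U, hU, ⟨t, htU⟩, hUA⟩ := exists_isOpen_subset_or_subset_compl (Y := closure B)
    (hA.preimage continuous_subtype_val) (hAc.preimage continuous_subtype_val)
  obtain ⟨O, hO, rfl⟩ := isOpen_induced_iff.1 hU
  obtain ⟨b, hbO, hbB⟩ := mem_closure_iff.1 t.2 O hO htU
  have hconst : (∀ x ∈ B ∩ O, x ∈ A) ∨ ∀ x ∈ B ∩ O, x ∉ A :=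
    hUA.imp (fun h x hx => h (a := ⟨x, subset_closure hx.1⟩) hx.2)
      (fun h x hx => h (a := ⟨x, subset_closure hx.1⟩) hx.2)
  have hev : ∀ᶠ x in 𝓝[B] b, x ∈ B ∩ O := inter_mem_nhdsWithin B (hO.mem_nhds hbO)
  refine ⟨b, hbB, ?_⟩
  rcases hconst with h | h
  · exact continuousWithinAt_const.congr_of_eventuallyEq
      (hev.mono fun x hx => indicator_of_mem (h x hx) _) (indicator_of_mem (h b ⟨hbB, hbO⟩) _)
  · exact continuousWithinAt_const.congr_of_eventuallyEq
      (hev.mono fun x hx => indicator_of_notMem (h x hx) _)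
      (indicator_of_notMem (h b ⟨hbB, hbO⟩) _)

section RatBox

variable {ι : Type*}

def ratBox (c : Finset (ι × ℚ × ℚ)) : Set (ι → ℝ) :=
  {y | ∀ t ∈ c, y t.1 ∈ Ioo (t.2.1 : ℝ) t.2.2}

def closedRatBox (c : Finset (ι × ℚ × ℚ)) : Set (ι → ℝ) :=
  {y | ∀ t ∈ c, y t.1 ∈ Icc (t.2.1 : ℝ) t.2.2}

def ratBoxes (B : Finset (Finset (ι × ℚ × ℚ))) : Set (ι → ℝ) :=
  ⋃ c ∈ B, ratBox c

lemma isOpen_ratBox (c : Finset (ι × ℚ × ℚ)) : IsOpen (ratBox c) := by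
  simp only [ratBox, ofPred_forall]
  exact isOpen_biInter_finset fun t _ => isOpen_Ioo.preimage (continuous_apply t.1)

lemma isClosed_closedRatBox (c : Finset (ι × ℚ × ℚ)) : IsClosed (closedRatBox c) := by
  simp only [closedRatBox, ofPred_forall]
  exact isClosed_biInter fun t _ => isClosed_Icc.preimage (continuous_apply t.1)

lemma ratBox_subset_closedRatBox (c : Finset (ι × ℚ × ℚ)) : ratBox c ⊆ closedRatBox c :=
  fun _ hy t ht => Ioo_subset_Icc_self (hy t ht)

lemma isOpen_ratBoxes (B : Finset (Finset (ι × ℚ × ℚ))) : IsOpen (ratBoxes B) :=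
  isOpen_biUnion fun c _ => isOpen_ratBox c

lemma closure_ratBoxes_subset (B : Finset (Finset (ι × ℚ × ℚ))) :
    closure (ratBoxes B) ⊆ ⋃ c ∈ B, closedRatBox c :=
  closure_minimal (iUnion₂_mono fun c _ => ratBox_subset_closedRatBox c)
    (B.finite_toSet.isClosed_biUnion fun c _ => isClosed_closedRatBox c)

lemma exists_mem_ratBox_closedRatBox_subset {V : Set (ι → ℝ)} (hV : IsOpen V) {y : ι → ℝ}
    (hy : y ∈ V) : ∃ c, y ∈ ratBox c ∧ closedRatBox c ⊆ V := by
  classical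
  obtain ⟨I, u, hu, hIu⟩ := isOpen_pi_iff.1 hV y hy
  have hq : ∀ i ∈ I, ∃ q : ℚ × ℚ, y i ∈ Ioo (q.1 : ℝ) q.2 ∧ Icc (q.1 : ℝ) q.2 ⊆ u i := by
    intro i hi
    obtain ⟨l, r, ⟨hl, hr⟩, hlr⟩ :=
      mem_nhds_iff_exists_Ioo_subset.1 ((hu i hi).1.mem_nhds (hu i hi).2)
    obtain ⟨a, hla, hay⟩ := exists_rat_btwn hl
    obtain ⟨b, hyb, hbr⟩ := exists_rat_btwn hr
    exact ⟨(a, b), ⟨hay, hyb⟩, (Icc_subset_Ioo hla hbr).trans hlr⟩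
  choose! q hq using hq
  refine ⟨I.image fun i => (i, q i), ?_, fun z hz => hIu fun i hi => ?_⟩
  · simpa only [ratBox, mem_ofPred_eq, Finset.forall_mem_image] using fun i hi => (hq i hi).1
  · exact (hq i hi).2 (hz _ (Finset.mem_image_of_mem _ hi))

lemma exists_ratBoxes_of_isCompact {S V : Set (ι → ℝ)} (hS : IsCompact S) (hV : IsOpen V)
    (hSV : S ⊆ V) :
    ∃ B : Finset (Finset (ι × ℚ × ℚ)), S ⊆ ratBoxes B ∧ ∀ c ∈ B, closedRatBox c ⊆ V := by
  classical
  choose c hyc hcV using fun y : V => exists_mem_ratBox_closedRatBox_subset hV y.2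
  obtain ⟨F, hF⟩ := hS.elim_finite_subcover (fun y => ratBox (c y)) (fun y => isOpen_ratBox _)
    fun y hy => mem_iUnion.2 ⟨⟨y, hSV hy⟩, hyc _⟩
  refine ⟨F.image c, fun y hy => ?_, by simpa only [Finset.forall_mem_image] using fun y _ => hcV y⟩
  obtain ⟨z, hz, hyz⟩ := mem_iUnion₂.1 (hF hy)
  exact mem_biUnion (Finset.mem_image_of_mem c hz) hyz

/-- `B` pulled back along `p`; meaningful only if `p` hits every coordinate that `B` constrains. -/
noncomputable def reindexRatBoxes {κ : Type*} [Nonempty κ] [DecidableEq κ] (p : κ → ι)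
    (B : Finset (Finset (ι × ℚ × ℚ))) : Finset (Finset (κ × ℚ × ℚ)) :=
  B.image (Finset.image (Prod.map (Function.invFun p) id))

lemma comp_mem_reindexRatBoxes_iff {κ : Type*} [Nonempty κ] [DecidableEq κ] {p : κ → ι}
    {B : Finset (Finset (ι × ℚ × ℚ))} (hB : ∀ c ∈ B, ∀ t ∈ c, t.1 ∈ range p) (y : ι → ℝ) :
    y ∘ p ∈ ratBoxes (reindexRatBoxes p B) ↔ y ∈ ratBoxes B := by
  simp only [reindexRatBoxes, ratBoxes, mem_iUnion₂, exists_prop, Finset.exists_mem_image]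
  refine exists_congr fun c => and_congr_right fun hc => ?_
  simp only [ratBox, mem_ofPred_eq, Finset.forall_mem_image, Prod.map_fst, Prod.map_snd, id,
    Function.comp]
  exact forall₂_congr fun t ht => by rw [Function.invFun_eq (hB c hc t ht)]

lemma isGδ_setOf_notMem_ratBoxes {X : Type*} [TopologicalSpace X] {F : X → ι → ℝ}
    (hF : ∀ i, IsBaireOne fun x => F x i) (B : Finset (Finset (ι × ℚ × ℚ))) :
    IsGδ {x | F x ∉ ratBoxes B} := by
  have : {x | F x ∉ ratBoxes B} =
      ⋂ c ∈ B, ⋃ t ∈ c, ((fun x => F x t.1) ⁻¹' Ioo (t.2.1 : ℝ) t.2.2)ᶜ := by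
    ext x
    simp [ratBoxes, ratBox]
  rw [this]
  exact IsGδ.biInter B.countable_toSet fun c _ =>
    IsGδ.biUnion c.finite_toSet fun t _ => (hF t.1).isGδ_compl_preimage_Ioo _ _

end RatBox

lemma isGδ_setOf_mem_fst {Y : Type*} [TopologicalSpace Y] {S : ℕ → Set (ℕ × Y)}
    (hS : ∀ n, IsGδ (S n)) : IsGδ {x | x ∈ S x.1} := by
  have : {x | x ∈ S x.1} = ⋂ n, (Prod.fst ⁻¹' {n}ᶜ ∪ S n) := by
    ext x
    simp only [mem_ofPred_eq, mem_iInter, mem_union, mem_preimage, mem_compl_iff,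
      mem_singleton_iff]
    refine ⟨fun hx n => ?_, fun h => (h x.1).resolve_left (· rfl)⟩
    rcases eq_or_ne x.1 n with rfl | hn
    exacts [Or.inr hx, Or.inl hn]
  rw [this]
  exact IsGδ.iInter fun n => ((isOpen_discrete _).preimage continuous_fst).isGδ.union (hS n)

section Codes

variable {K P : Type*}

def codedSet (φ : K → P → ℝ) (B : Finset (Finset (ℕ × ℚ × ℚ))) (p : ℕ → P) : Set K :=
  {k | φ k ∘ p ∈ ratBoxes B}

lemma isOpen_codedSet [TopologicalSpace K] {φ : K → P → ℝ} (hφ : Continuous φ)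
    (B : Finset (Finset (ℕ × ℚ × ℚ))) (p : ℕ → P) : IsOpen (codedSet φ B p) :=
  (isOpen_ratBoxes B).preimage (continuous_pi fun j => (continuous_apply (p j)).comp hφ)

/-- The closed boxes of `C` certify that `B₁` and `B₂` cover `K` (see `compl_codedSet`) by
conditions quantifying over `D` only; for countable `D` this keeps the set of codes Borel. -/
def IsPartitionCode (φ : K → P → ℝ) (D : Set K) (B₁ B₂ C : Finset (Finset (ℕ × ℚ × ℚ)))
    (p : ℕ → P) : Prop :=
  (∀ k ∈ D, k ∉ codedSet φ B₁ p ∩ codedSet φ B₂ p) ∧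
    (∀ c ∈ C, closedRatBox c ⊆ ratBoxes B₁ ∪ ratBoxes B₂) ∧ ∀ k ∈ D, φ k ∘ p ∈ ratBoxes C

namespace IsPartitionCode

variable [TopologicalSpace K] {φ : K → P → ℝ} {D : Set K} {B₁ B₂ C : Finset (Finset (ℕ × ℚ × ℚ))}
  {p : ℕ → P}

lemma compl_codedSet (h : IsPartitionCode φ D B₁ B₂ C p) (hφ : Continuous φ) (hD : Dense D) :
    (codedSet φ B₁ p)ᶜ = codedSet φ B₂ p := by
  have hev : Continuous fun k => φ k ∘ p :=
    continuous_pi fun j => (continuous_apply (p j)).comp hφ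
  ext k
  refine ⟨fun hk => ?_, fun hk hk₁ => ?_⟩
  · have hkC : φ k ∘ p ∈ closure (ratBoxes C) :=
      map_mem_closure (f := fun k => φ k ∘ p) hev (hD.closure_eq ▸ mem_univ k) h.2.2
    obtain ⟨c, hc, hkc⟩ := mem_iUnion₂.1 (closure_ratBoxes_subset C hkC)
    exact (h.2.1 c hc hkc).resolve_left hk
  · obtain ⟨k', hk', hk'D⟩ := hD.inter_open_nonempty _
      ((isOpen_codedSet hφ B₁ p).inter (isOpen_codedSet hφ B₂ p)) ⟨k, hk₁, hk⟩
    exact h.1 k' hk'D hk'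

lemma isClopen (h : IsPartitionCode φ D B₁ B₂ C p) (hφ : Continuous φ) (hD : Dense D) :
    IsClopen (codedSet φ B₁ p) :=
  ⟨by rw [← isOpen_compl_iff, h.compl_codedSet hφ hD]; exact isOpen_codedSet hφ B₂ p,
    isOpen_codedSet hφ B₁ p⟩

end IsPartitionCode

lemma Topology.IsEmbedding.exists_ratBoxes_preimage_eq [TopologicalSpace K] {ι : Type*}
    {φ : K → ι → ℝ} (hφ : IsEmbedding φ) {U : Set K} (hUc : IsCompact U) (hUo : IsOpen U) :
    ∃ B : Finset (Finset (ι × ℚ × ℚ)), φ ⁻¹' ratBoxes B = U := by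
  obtain ⟨V, hV, rfl⟩ := hφ.isInducing.isOpen_iff.1 hUo
  obtain ⟨B, hcov, hsub⟩ := exists_ratBoxes_of_isCompact (hUc.image hφ.continuous) hV
    (image_preimage_subset φ V)
  refine ⟨B, Subset.antisymm (preimage_mono ?_) fun k hk => hcov (mem_image_of_mem φ hk)⟩
  exact iUnion₂_subset fun c hc => (ratBox_subset_closedRatBox c).trans (hsub c hc)

lemma exists_isPartitionCode [TopologicalSpace K] [CompactSpace K] [Nonempty P]
    {φ : K → P → ℝ} (hφ : IsEmbedding φ) (D : Set K) {U : Set K} (hU : IsClopen U) :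
    ∃ B₁ B₂ C p, IsPartitionCode φ D B₁ B₂ C p ∧ codedSet φ B₁ p = U := by
  obtain ⟨B, hB⟩ := hφ.exists_ratBoxes_preimage_eq hU.isClosed.isCompact hU.isOpen
  obtain ⟨B', hB'⟩ := hφ.exists_ratBoxes_preimage_eq hU.compl.isClosed.isCompact hU.compl.isOpen
  classical
  obtain ⟨p, hp⟩ := countable_iff_exists_subset_range.1
    ((B ∪ B').biUnion (Finset.image Prod.fst)).countable_toSet
  have hcoded : ∀ B'' ⊆ B ∪ B', codedSet φ (reindexRatBoxes p B'') p = φ ⁻¹' ratBoxes B'' := by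
    intro B'' hB''
    ext k
    refine comp_mem_reindexRatBoxes_iff (fun c hc t ht => hp ?_) (φ k)
    simp only [Finset.coe_biUnion, Finset.coe_image, mem_iUnion, mem_image]
    exact ⟨c, hB'' hc, t, ht, rfl⟩
  have h₁ := (hcoded B Finset.subset_union_left).trans hB
  have h₂ := (hcoded B' Finset.subset_union_right).trans hB'
  obtain ⟨C, hC, hCsub⟩ := exists_ratBoxes_of_isCompact
    (isCompact_range (continuous_pi fun j => (continuous_apply (p j)).comp hφ.continuous))
    ((isOpen_ratBoxes _).union (isOpen_ratBoxes _)) (by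
      rintro _ ⟨k, rfl⟩
      show k ∈ codedSet φ (reindexRatBoxes p B) p ∪ codedSet φ (reindexRatBoxes p B') p
      rw [h₁, h₂]
      exact em (k ∈ U))
  refine ⟨_, _, C, p, ⟨fun k _ hk => ?_, hCsub, fun k _ => hC (mem_range_self k)⟩, h₁⟩
  rw [h₁, h₂] at hk
  exact hk.2 hk.1

noncomputable def boxData : ℕ → Finset (Finset (ℕ × ℚ × ℚ)) × Finset (Finset (ℕ × ℚ × ℚ)) ×
    Finset (Finset (ℕ × ℚ × ℚ)) :=
  (exists_surjective_nat _).choose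

lemma boxData_surjective : Function.Surjective boxData :=
  (exists_surjective_nat _).choose_spec

def partitionCodes (φ : K → P → ℝ) (D : Set K) : Set (ℕ × (ℕ → P)) :=
  {x | IsPartitionCode φ D (boxData x.1).1 (boxData x.1).2.1 (boxData x.1).2.2 x.2}

variable [TopologicalSpace P]

lemma isGδ_setOf_notMem_codedSet {φ : K → P → ℝ} (hφB : ∀ k, IsBaireOne (φ k)) (k : K)
    (B : ℕ → Finset (Finset (ℕ × ℚ × ℚ))) :
    IsGδ {x : ℕ × (ℕ → P) | k ∉ codedSet φ (B x.1) x.2} :=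
  isGδ_setOf_mem_fst (S := fun n => {x | φ k ∘ x.2 ∉ ratBoxes (B n)}) fun n =>
    isGδ_setOf_notMem_ratBoxes
      (fun i => (hφB k).comp_continuous ((continuous_apply i).comp continuous_snd)) (B n)

lemma measurableSet_partitionCodes [MeasurableSpace (ℕ × (ℕ → P))]
    [OpensMeasurableSpace (ℕ × (ℕ → P))] {φ : K → P → ℝ} (hφB : ∀ k, IsBaireOne (φ k))
    {D : Set K} (hD : D.Countable) : MeasurableSet (partitionCodes φ D) := by
  have hdisj : IsGδ {x : ℕ × (ℕ → P) | ∀ k ∈ D,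
      k ∉ codedSet φ (boxData x.1).1 x.2 ∩ codedSet φ (boxData x.1).2.1 x.2} := by
    simp only [mem_inter_iff, not_and_or, ofPred_forall]
    exact IsGδ.biInter hD fun k _ =>
      (isGδ_setOf_notMem_codedSet hφB k fun n => (boxData n).1).union
        (isGδ_setOf_notMem_codedSet hφB k fun n => (boxData n).2.1)
  have hcert : IsOpen {x : ℕ × (ℕ → P) | ∀ c ∈ (boxData x.1).2.2,
      closedRatBox c ⊆ ratBoxes (boxData x.1).1 ∪ ratBoxes (boxData x.1).2.1} :=
    (isOpen_discrete {n | ∀ c ∈ (boxData n).2.2,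
      closedRatBox c ⊆ ratBoxes (boxData n).1 ∪ ratBoxes (boxData n).2.1}).preimage continuous_fst
  have hcov : MeasurableSet
      {x : ℕ × (ℕ → P) | ∀ k ∈ D, k ∈ codedSet φ (boxData x.1).2.2 x.2} := by
    simp only [ofPred_forall]
    refine MeasurableSet.biInter hD fun k _ => ?_
    simpa only [compl_ofPred, not_not] using
      (isGδ_setOf_notMem_codedSet hφB k fun n => (boxData n).2.2).measurableSet.compl
  exact hdisj.measurableSet.inter (hcert.measurableSet.inter hcov)

end Codes

theorem exists_clopen_parametrization {K P : Type*} [TopologicalSpace K] [CompactSpace K]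
    [TopologicalSpace.SeparableSpace K] [TopologicalSpace P] [PolishSpace P] [Nonempty P]
    {φ : K → P → ℝ} (hφ : IsEmbedding φ) (hφB : ∀ k, IsBaireOne (φ k)) :
    ∃ W : (ℕ → ℕ) → Set K, (∀ z, IsClopen (W z)) ∧ (∀ U, IsClopen U → ∃ z, W z = U) ∧
      ∀ k, IsGδ {z | k ∈ W z} ∧ IsGδ {z | k ∉ W z} := by
  obtain ⟨D, hDc, hD⟩ := TopologicalSpace.exists_countable_dense K
  have hcode : ∀ U, IsClopen U →
      ∃ x ∈ partitionCodes φ D, codedSet φ (boxData x.1).1 x.2 = U := by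
    intro U hU
    obtain ⟨B₁, B₂, C, p, hcode, rfl⟩ := exists_isPartitionCode hφ D hU
    obtain ⟨n, hn⟩ := boxData_surjective (B₁, B₂, C)
    exact ⟨(n, p), by simpa [partitionCodes, hn] using hcode, by simp [hn]⟩
  obtain ⟨σ, hσ, hσG⟩ :
      ∃ σ : (ℕ → ℕ) → ℕ × (ℕ → P), Continuous σ ∧ range σ = partitionCodes φ D := by
    borelize (ℕ × (ℕ → P))
    have h := (measurableSet_partitionCodes hφB hDc).analyticSet
    rw [MeasureTheory.AnalyticSet] at h
    obtain ⟨x, hx, -⟩ := hcode ∅ isClopen_empty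
    exact h.resolve_left (nonempty_of_mem hx).ne_empty
  have hgood : ∀ z, σ z ∈ partitionCodes φ D := fun z => hσG ▸ mem_range_self z
  refine ⟨fun z => codedSet φ (boxData (σ z).1).1 (σ z).2,
    fun z => IsPartitionCode.isClopen (hgood z) hφ.continuous hD, fun U hU => ?_,
    fun k => ⟨?_, (isGδ_setOf_notMem_codedSet hφB k fun n => (boxData n).1).preimage hσ⟩⟩
  · obtain ⟨x, hx, rfl⟩ := hcode U hU
    obtain ⟨z, rfl⟩ := hσG.symm ▸ hx
    exact ⟨z, rfl⟩
  · have : {z | k ∈ codedSet φ (boxData (σ z).1).1 (σ z).2} =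
        σ ⁻¹' {x | k ∉ codedSet φ (boxData x.1).2.1 x.2} := by
      ext z
      show k ∈ codedSet φ (boxData (σ z).1).1 (σ z).2 ↔
        k ∉ codedSet φ (boxData (σ z).1).2.1 (σ z).2
      rw [← IsPartitionCode.compl_codedSet (hgood z) hφ.continuous hD, mem_compl_iff, not_not]
    rw [this]
    exact (isGδ_setOf_notMem_codedSet hφB k fun n => (boxData n).2.1).preimage hσ

lemma exists_separating_clopen_family {K : Type*} [TopologicalSpace K] [CompactSpace K]
    [T1Space K] [TopologicalSpace.SeparableSpace K]
    (hzd : TopologicalSpace.IsTopologicalBasis {s : Set K | IsClopen s}) {P : Type*}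
    [TopologicalSpace P] [PolishSpace P] {φ : K → P → ℝ} (hφ : IsEmbedding φ)
    (hφB : ∀ k, IsBaireOne (φ k)) :
    ∃ W : (ℕ → ℕ) → Set K, (∀ z, IsClopen (W z)) ∧
      (∀ k k', k ≠ k' → ∃ z, k ∈ W z ∧ k' ∉ W z) ∧
      ∀ k, IsGδ {z | k ∈ W z} ∧ IsGδ {z | k ∉ W z} := by
  cases isEmpty_or_nonempty P
  · have := hφ.injective.subsingleton
    exact ⟨fun _ => ∅, fun _ => isClopen_empty, fun k k' h => (h (Subsingleton.elim k k')).elim,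
      fun k => by simp [IsGδ.empty, IsGδ.univ]⟩
  obtain ⟨W, hWclopen, hWall, hWfib⟩ := exists_clopen_parametrization hφ hφB
  refine ⟨W, hWclopen, fun k k' hne => ?_, hWfib⟩
  obtain ⟨U, hU, hkU, hUk'⟩ := hzd.exists_subset_of_mem_open hne isOpen_compl_singleton
  obtain ⟨z, rfl⟩ := hWall U hU
  exact ⟨z, hkU, fun h => hUk' h rfl⟩

lemma isEmbedding_indicator_of_separating {K Z : Type*} [TopologicalSpace K] [CompactSpace K]
    {W : Z → Set K} (hW : ∀ z, IsClopen (W z))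
    (hsep : ∀ k k', k ≠ k' → ∃ z, k ∈ W z ∧ k' ∉ W z) :
    IsEmbedding fun k z => (W z).indicator (1 : K → ℝ) k := by
  refine (Continuous.isClosedEmbedding (continuous_pi fun z => ?_) fun k k' h => ?_).isEmbedding
  · exact continuous_indicator (by simp [(hW z).frontier_eq]) continuousOn_const
  · by_contra hne
    obtain ⟨z, hk, hk'⟩ := hsep k k' hne
    simpa [hk, hk'] using congrFun h z

/-- Each zero-dimensional separable Rosenthal compact space `K` (a compact Hausdorff space
with a base of clopen sets, having a countable dense subset, which embeds into the space
`B₁(P)` of Baire class one functions on some Polish space `P` with the pointwise topology)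
is homeomorphic to a compact subset of the function space `SC_p(ω^ω)` over the Baire space
`ω^ω = ℕ → ℕ`. -/
theorem stmt15 {K : Type*} [TopologicalSpace K] [CompactSpace K] [T2Space K]
    [TopologicalSpace.SeparableSpace K]
    (hzd : TopologicalSpace.IsTopologicalBasis {s : Set K | IsClopen s})
    (hRos : ∃ (P : Type) (_ : TopologicalSpace P), PolishSpace P ∧
      ∃ φ : K → P → ℝ, Topology.IsEmbedding φ ∧ ∀ k, IsBaireOne (φ k)) :
    ∃ ψ : K → (ℕ → ℕ) → ℝ, Topology.IsEmbedding ψ ∧ (∀ k, ScatCont (ψ k)) ∧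
      IsCompact (Set.range ψ) := by
  obtain ⟨P, _, _, φ, hφ, hφB⟩ := hRos
  obtain ⟨W, hWclopen, hWsep, hWfib⟩ := exists_separating_clopen_family hzd hφ hφB
  have hψ := isEmbedding_indicator_of_separating hWclopen hWsep
  exact ⟨_, hψ, fun k => scatCont_indicator_of_isGδ (hWfib k).1 (hWfib k).2,
    isCompact_range hψ.continuous⟩
end

section
/- Let X be a topological space and F a σ-convex subset of ℝ^X (with the product/pointwise topology). Then F is pointwise bounded: for every x ∈ X the set { f(x) : f ∈ F } is a bounded subset of ℝ. -/
open Set Filter Topology Cardinal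

/-- Every σ-convex subset `F` of `ℝ^X` (with the pointwise topology) is pointwise bounded:
for every `x ∈ X` the set `{f(x) : f ∈ F}` is a bounded subset of `ℝ`. -/
theorem stmt16 {X : Type*} [TopologicalSpace X] (F : Set (X → ℝ)) (hσ : SigmaConvex F)
    (x : X) :
    Bornology.IsBounded ((fun f : X → ℝ => f x) '' F) := by
  by_contra hb
  have h : ∀ n : ℕ, ∃ f ∈ F, (2:ℝ)^(n+1) < |f x| := by
    intro n
    by_contra h
    push_neg at h
    exact hb (isBounded_iff_forall_norm_le.mpr
      ⟨2^(n+1), by rintro _ ⟨f, hf, rfl⟩; simpa [Real.norm_eq_abs] using h f hf⟩)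
  choose f hfF hf using h
  set t : ℕ → ℝ := fun n => 1/2/2^n with ht_def
  have ht : ∀ n, 0 < t n := fun n => by positivity
  have hsum : Tendsto (fun N => ∑ n ∈ Finset.range N, t n) atTop (𝓝 1) :=
    (hasSum_geometric_two' 1).tendsto_sum_nat
  obtain ⟨c, hcF, hc⟩ := hσ f t hfF ht hsum
  have hcx : Tendsto (fun N => ∑ n ∈ Finset.range N, t n * f n x) atTop (𝓝 (c x)) := by
    have := ((continuous_apply x).tendsto c).comp hc
    simpa [Function.comp_def, Finset.sum_apply] using this
  have hterm : Tendsto (fun n => t n * f n x) atTop (𝓝 0) := by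
    have h1 := (hcx.comp (tendsto_add_atTop_nat 1)).sub hcx
    simp only [Function.comp_def, Finset.sum_range_succ, add_sub_cancel_left,
      sub_self] at h1
    exact h1
  obtain ⟨N, hN⟩ := (Metric.tendsto_atTop.mp hterm) 1 one_pos
  have h2 := hN N le_rfl
  rw [Real.dist_eq, sub_zero, abs_mul, abs_of_pos (ht N)] at h2
  have h3 : (1:ℝ) < t N * |f N x| := by
    have := mul_lt_mul_of_pos_left (hf N) (ht N)
    calc (1:ℝ) = t N * 2^(N+1) := by
          rw [ht_def]; field_simp; rw [pow_succ]; ring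
      _ < t N * |f N x| := this
  linarith
end

section
/- Every compact convex subset K of a Hausdorff topological vector space L over ℝ is σ-convex: for every sequence (x_n)_{n∈ℕ} in K and every sequence (t_n)_{n∈ℕ} of positive reals with ∑_n t_n = 1, the series ∑_n t_n x_n converges in L to a point of K. -/
open Set Filter Topology Cardinal

/-! The partial sums `S N = ∑_{n<N} tₙ xₙ` and their differences are convex combinations of
points of `K` scaled by the corresponding partial sums `T N` of the weights:
`S M - S N = (T M - T N) • k` with `k ∈ K`. Since `K` is bounded and `T` converges, `S` is
Cauchy, and it lives in the compact set `{1, T 0, T 1, …} • K`, so it converges to some `y`.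
Finally `(T N)⁻¹ • S N ∈ K` tends to `y`, and `K` is closed. -/

open scoped Pointwise

theorem Convex.exists_sum_smul_eq_smul {𝕜 E ι : Type*} [Field 𝕜] [LinearOrder 𝕜]
    [IsStrictOrderedRing 𝕜] [AddCommGroup E] [Module 𝕜 E] {K : Set E} (hK : Convex 𝕜 K)
    (hne : K.Nonempty) {s : Finset ι} {t : ι → 𝕜} {x : ι → E}
    (ht : ∀ i ∈ s, 0 ≤ t i) (hx : ∀ i ∈ s, x i ∈ K) :
    ∃ k ∈ K, ∑ i ∈ s, t i • x i = (∑ i ∈ s, t i) • k := by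
  rcases (Finset.sum_nonneg ht).eq_or_lt with hzero | hpos
  · obtain ⟨k, hk⟩ := hne
    have ht0 : ∀ i ∈ s, t i = 0 := (Finset.sum_eq_zero_iff_of_nonneg ht).1 hzero.symm
    refine ⟨k, hk, ?_⟩
    rw [← hzero, zero_smul]
    exact Finset.sum_eq_zero fun i hi => by rw [ht0 i hi, zero_smul]
  · refine ⟨s.centerMass t x, hK.centerMass_mem ht hpos hx, ?_⟩
    rw [Finset.centerMass, smul_inv_smul₀ hpos.ne']

theorem Convex.exists_sum_range_sub_eq_smul {𝕜 E : Type*} [Field 𝕜] [LinearOrder 𝕜]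
    [IsStrictOrderedRing 𝕜] [AddCommGroup E] [Module 𝕜 E] {K : Set E} (hK : Convex 𝕜 K)
    {t : ℕ → 𝕜} {x : ℕ → E} (ht : ∀ n, 0 ≤ t n) (hx : ∀ n, x n ∈ K) (N M : ℕ) :
    ∃ k ∈ K, ∑ n ∈ Finset.range M, t n • x n - ∑ n ∈ Finset.range N, t n • x n =
      (∑ n ∈ Finset.range M, t n - ∑ n ∈ Finset.range N, t n) • k := by
  wlog hNM : N ≤ M generalizing N M
  · obtain ⟨k, hk, h⟩ := this M N (le_of_not_ge hNM)
    exact ⟨k, hk, by rw [← neg_sub, h, ← neg_smul, neg_sub]⟩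
  rw [← Finset.sum_Ico_eq_sub _ hNM, ← Finset.sum_Ico_eq_sub _ hNM]
  exact hK.exists_sum_smul_eq_smul ⟨x 0, hx 0⟩ (fun n _ => ht n) (fun n _ => hx n)

theorem IsCompact.exists_tendsto_of_tendsto_sub {G ι : Type*} [AddCommGroup G]
    [TopologicalSpace G] [IsTopologicalAddGroup G] [SemilatticeSup ι] [Nonempty ι]
    {C : Set G} (hC : IsCompact C) {S : ι → G} (hS : ∀ i, S i ∈ C)
    (h : Tendsto (fun p : ι × ι => S p.2 - S p.1) atTop (𝓝 0)) :
    ∃ y ∈ C, Tendsto S atTop (𝓝 y) := by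
  let := IsTopologicalAddGroup.rightUniformSpace G
  have := isUniformAddGroup_of_addCommGroup (G := G)
  refine cauchySeq_tendsto_of_isComplete hC.isComplete hS ?_
  rw [cauchySeq_iff_tendsto, uniformity_eq_comap_nhds_zero, tendsto_comap_iff]
  exact h

/-- Every compact convex subset `K` of a Hausdorff topological vector space `L` over `ℝ`
is σ-convex. -/
theorem stmt17 {L : Type*} [AddCommGroup L] [Module ℝ L] [TopologicalSpace L] [T2Space L]
    [IsTopologicalAddGroup L] [ContinuousSMul ℝ L]
    (K : Set L) (hcomp : IsCompact K) (hconv : Convex ℝ K) :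
    SigmaConvex K := by
  intro x t hx ht hT
  set T : ℕ → ℝ := fun N => ∑ n ∈ Finset.range N, t n
  set S : ℕ → L := fun N => ∑ n ∈ Finset.range N, t n • x n
  choose k hkK hk using hconv.exists_sum_range_sub_eq_smul (fun n => (ht n).le) hx
  replace hk : ∀ N M, S M - S N = (T M - T N) • k N M := hk
  have hS : ∀ N, S N = T N • k 0 N := fun N => by simpa [S, T] using hk 0 N
  have hTsub : Tendsto (fun p : ℕ × ℕ => T p.2 - T p.1) atTop (𝓝 0) := by
    rw [← prod_atTop_atTop_eq]
    simpa using (hT.comp tendsto_snd).sub (hT.comp tendsto_fst)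
  have hSsub : Tendsto (fun p : ℕ × ℕ => S p.2 - S p.1) atTop (𝓝 0) := by
    simp only [hk]
    exact (hcomp.isVonNBounded ℝ).smul_tendsto_zero (.of_forall fun p => hkK p.1 p.2) hTsub
  have hSC : ∀ N, S N ∈ insert 1 (Set.range T) • K := fun N =>
    hS N ▸ Set.smul_mem_smul (Set.mem_insert_of_mem _ (Set.mem_range_self N)) (hkK 0 N)
  obtain ⟨y, -, hy⟩ :=
    (hT.isCompact_insert_range.smul_set hcomp).exists_tendsto_of_tendsto_sub hSC hSsub
  have hky : Tendsto (fun N => (T N)⁻¹ • S N) atTop (𝓝 y) := by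
    simpa using (hT.inv₀ one_ne_zero).smul hy
  refine ⟨y, hcomp.isClosed.mem_of_tendsto hky ?_, hy⟩
  filter_upwards [hT.eventually_ne one_ne_zero] with N hN
  rw [hS, inv_smul_smul₀ hN]
  exact hkK 0 N
end
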